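/- arXiv:0809.1207 — 4 statements merged into one kernel-verified Lean document; each statement's English description precedes it below -/
import Mathlib

section
/- Let g be a positive definite quadratic form on ℝ^{2n} = ℝⁿ × ℝⁿ which is splitted, i.e. g(z,ζ) = g₁(z) + g₂(ζ) for positive definite quadratic forms g₁, g₂ on ℝⁿ. Then there exist a basis e₁,…,e_n of ℝⁿ × {0} and vectors ε₁,…,ε_n in {0} × ℝⁿ such that e₁,…,e_n,ε₁,…,ε_n is a symplectic basis for the standard symplectic form σ on ℝ^{2n} (i.e. σ(e_j,e_k) = σ(ε_j,ε_k) = 0 and σ(e_j,ε_k) = −δ_{jk}), together with numbers λ₁,…,λ_n > 0, such that g(Z) = Σ_{j=1}^n λ_j (z_j² + ζ_j²) for every Z = Σ_{j=1}^n (z_j e_j + ζ_j ε_j). -/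
open MeasureTheory Complex Filter Topology
open scoped BigOperators ENNReal

noncomputable section

/-- `V n` is the configuration space `ℝⁿ`. -/
abbrev V (n : ℕ) := EuclideanSpace ℝ (Fin n)

/-- `W n` is the phase space `ℝ²ⁿ = ℝⁿ × ℝⁿ`. -/
abbrev W (n : ℕ) := V n × V n

/-- The standard symplectic form `σ((x,ξ),(y,η)) = ⟨y,ξ⟩ − ⟨x,η⟩` on `W n`. -/
def symp {n : ℕ} (X Y : W n) : ℝ := (∑ j, Y.1 j * X.2 j) - ∑ j, X.1 j * Y.2 j

/-- A Riemannian metric on `W n`: a positive definite quadratic form at each point. -/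
structure RMetric (n : ℕ) where
  val : W n → W n → ℝ
  quad : ∀ X : W n, ∃ B : W n →ₗ[ℝ] W n →ₗ[ℝ] ℝ, ∀ Z : W n, val X Z = B Z Z
  posdef : ∀ X : W n, ∀ Z : W n, Z ≠ 0 → 0 < val X Z

/-- The dual of a family of quadratic forms with respect to the symplectic form. -/
def dualFn {n : ℕ} (G : W n → W n → ℝ) (X Z : W n) : ℝ :=
  ⨆ Y : {Y : W n // Y ≠ 0}, (symp Y.1 Z) ^ 2 / G X Y.1

/-- The dual metric `g^σ`. -/
def dualM {n : ℕ} (g : RMetric n) : W n → W n → ℝ := dualFn g.val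

/-- Planck's function `h_g`. -/
def planck {n : ℕ} (g : RMetric n) (X : W n) : ℝ :=
  ⨆ Z : {Z : W n // Z ≠ 0}, Real.sqrt (g.val X Z.1 / dualM g X Z.1)

/-- `g` is slowly varying. -/
def IsSlowlyVarying {n : ℕ} (g : RMetric n) : Prop :=
  ∃ c > (0:ℝ), ∃ C > (0:ℝ), ∀ X Y : W n, g.val X (Y - X) ≤ c →
    ∀ Z : W n, C⁻¹ * g.val Y Z ≤ g.val X Z ∧ g.val X Z ≤ C * g.val Y Z

/-- a positive function `m` is `g`-continuous. -/
def IsGCont {n : ℕ} (g : RMetric n) (m : W n → ℝ) : Prop :=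
  ∃ c > (0:ℝ), ∃ C > (0:ℝ), ∀ X Y : W n, g.val X (Y - X) ≤ c →
    C⁻¹ * m Y ≤ m X ∧ m X ≤ C * m Y

/-- `g` is `σ`-temperate. -/
def IsSigmaTemperate {n : ℕ} (g : RMetric n) : Prop :=
  ∃ C > (0:ℝ), ∃ N₀ : ℕ, ∀ X Y Z : W n,
    g.val Y Z ≤ C * g.val X Z * (1 + dualM g Y (X - Y)) ^ N₀

/-- `g` is feasible: slowly varying with `h_g ≤ 1`. -/
def IsFeasible {n : ℕ} (g : RMetric n) : Prop :=
  IsSlowlyVarying g ∧ ∀ X : W n, planck g X ≤ 1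

/-- `g` is strongly feasible: feasible and `σ`-temperate. -/
def IsStronglyFeasible {n : ℕ} (g : RMetric n) : Prop :=
  IsFeasible g ∧ IsSigmaTemperate g

/-- a weight `m` is `(σ,g)`-temperate. -/
def IsSGTemperate {n : ℕ} (g : RMetric n) (m : W n → ℝ) : Prop :=
  ∃ C > (0:ℝ), ∃ N₀ : ℕ, ∀ X Y : W n,
    m X ≤ C * m Y * (1 + dualM g X (X - Y)) ^ N₀ ∧
    m X ≤ C * m Y * (1 + dualM g Y (X - Y)) ^ N₀

/-- `g` is splitted. -/
def IsSplitted {n : ℕ} (g : RMetric n) : Prop :=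
  ∀ X : W n, ∀ z ζ : V n, g.val X (z, ζ) = g.val X (z, -ζ)

/-- The seminorm `|a|^g_k(X)`: sup of the `k`-th differential over `g_X`-unit vectors. -/
def symbSemi {n : ℕ} (g : RMetric n) (a : W n → ℂ) (k : ℕ) (X : W n) : ℝ :=
  ⨆ Y : {Y : Fin k → W n // ∀ i, g.val X (Y i) ≤ 1},
    ‖iteratedFDeriv ℝ k a X Y.1‖

/-- Membership in the symbol class `S_N(m,g)`. -/
def MemSN {n : ℕ} (g : RMetric n) (m : W n → ℝ) (N : ℕ) (a : W n → ℂ) : Prop :=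
  ContDiff ℝ (N : ℕ∞) a ∧ ∀ k ≤ N, ∃ C : ℝ, ∀ X : W n, symbSemi g a k X ≤ C * m X

/-- Membership in the symbol class `S(m,g)`. -/
def MemS {n : ℕ} (g : RMetric n) (m : W n → ℝ) (a : W n → ℂ) : Prop :=
  ∀ N : ℕ, MemSN g m N a

/-- The norm `‖a‖^g_{m,N}` on `S_N(m,g)`. -/
def symbNorm {n : ℕ} (g : RMetric n) (m : W n → ℝ) (N : ℕ) (a : W n → ℂ) : ℝ :=
  ∑ k ∈ Finset.range (N + 1), ⨆ X : W n, symbSemi g a k X / m X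

/-- The weak form `B_{t,a}(f,h)` of the `t`-quantization `Op_t(a)`. -/
def tForm {n : ℕ} (t : ℝ) (a : W n → ℂ) (f h : SchwartzMap (V n) ℂ) : ℂ :=
  (2 * Real.pi : ℂ) ^ (-(n : ℤ)) * ∫ X : W n, a X *
    ∫ v : V n, f (X.1 - (1 - t) • v) * (starRingEnd ℂ) (h (X.1 + t • v)) *
      Complex.exp (Complex.I * ((∑ j, v j * X.2 j : ℝ) : ℂ))

/-- A finite family of Schwartz functions which is orthonormal in `L²`. -/
def ONFam {n k : ℕ} (f : Fin k → SchwartzMap (V n) ℂ) : Prop :=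
  ∀ i j, (∫ x : V n, f i x * (starRingEnd ℂ) (f j x)) = if i = j then (1:ℂ) else 0

/-- The value `(Σ_j |B_{t,a}(f_j,h_j)|^p)^{1/p}` (`sup_j` for `p = ∞`). -/
def spVal {n : ℕ} (p : ℝ≥0∞) (t : ℝ) (a : W n → ℂ) {k : ℕ}
    (f h : Fin k → SchwartzMap (V n) ℂ) : ℝ :=
  if p = ∞ then ⨆ j, ‖tForm t a (f j) (h j)‖
  else (∑ j, ‖tForm t a (f j) (h j)‖ ^ p.toReal) ^ (1 / p.toReal)

/-- The set of values over which the `s_{t,p}` norm is a supremum. -/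
def spSet {n : ℕ} (p : ℝ≥0∞) (t : ℝ) (a : W n → ℂ) : Set ℝ :=
  {r | ∃ (k : ℕ) (f h : Fin k → SchwartzMap (V n) ℂ),
    ONFam f ∧ ONFam h ∧ r = spVal p t a f h}

/-- `a ∈ s_{t,p}`: the `t`-quantization of `a` is a Schatten-von Neumann operator
of order `p`. -/
def MemSp {n : ℕ} (p : ℝ≥0∞) (t : ℝ) (a : W n → ℂ) : Prop := BddAbove (spSet p t a)

/-- The norm on `s_{t,p}`. -/
def spNorm {n : ℕ} (p : ℝ≥0∞) (t : ℝ) (a : W n → ℂ) : ℝ := sSup (spSet p t a)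

/-- `a ∈ s_♯^w`: the Weyl operator of `a` extends to a compact operator on `L²`. -/
def MemSsharp {n : ℕ} (a : W n → ℂ) : Prop :=
  ∃ T : Lp ℂ 2 (volume : Measure (V n)) →L[ℂ] Lp ℂ 2 (volume : Measure (V n)),
    IsCompactOperator T ∧
    ∀ (f h : SchwartzMap (V n) ℂ) (fL : Lp ℂ 2 (volume : Measure (V n))),
      (fL : V n → ℂ) =ᵐ[volume] (f : V n → ℂ) →
      (∫ x : V n, (T fL : V n → ℂ) x * (starRingEnd ℂ) (h x)) = tForm 2⁻¹ a f h

/-- Bounded by a polynomial in `|X|`. -/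
def PolyBounded {n : ℕ} {γ : Type*} [Norm γ] (u : W n → γ) : Prop :=
  ∃ C k : ℝ, ∀ X : W n, ‖u X‖ ≤ C * (1 + ‖X‖) ^ k

/-- Membership in `L^∞_0`: essentially bounded, with essential supremum outside balls
tending to `0`. -/
def MemLinfty0 {n : ℕ} {γ : Type*} [NormedAddCommGroup γ] (u : W n → γ) : Prop :=
  MemLp u ∞ (volume : Measure (W n)) ∧
    ∀ ε > (0:ℝ), ∃ R : ℝ, ∀ᵐ X : W n ∂(volume : Measure (W n)), R ≤ ‖X‖ → ‖u X‖ ≤ ε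

/-!
Since `σ((a, 0), (0, b)) = -⟨a, b⟩`, a split form `Q(z, ζ) = q₁(z) + q₂(ζ)` is diagonalised by
the splitted symplectic basis `e_j = (a_j, 0)`, `ε_j = (0, b_j)` as soon as the bases `(a_j)` and
`(b_j)` of `ℝⁿ` are dual for the dot product and diagonalise `q₁` and `q₂` with the same
coefficients. In matrix terms, for positive definite `M₁`, `M₂` we need `P`, `R` with
`Pᵀ R = 1` and `Pᵀ M₁ P = Rᵀ M₂ R = diag λ`. Taking `P = S⁻¹ U`, `R = S U` with `S = √M₁` and
`U` orthogonal diagonalising `S M₂ S` gives `Pᵀ M₁ P = 1` and `Rᵀ M₂ R = diag μ`; rescaling the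
columns by `μ ^ (1/4)` and `μ ^ (-1/4)` balances the two to `diag √μ`.
-/

open Matrix

section Diagonalization

variable {ι : Type*} [Fintype ι]

lemma Matrix.dotProduct_mulVec_mulVec_self (A M : Matrix ι ι ℝ) (x : ι → ℝ) :
    (A *ᵥ x) ⬝ᵥ M *ᵥ (A *ᵥ x) = x ⬝ᵥ (Aᵀ * M * A) *ᵥ x := by
  rw [← mulVec_mulVec, ← mulVec_mulVec, dotProduct_mulVec x Aᵀ, vecMul_transpose]

variable [DecidableEq ι]

open scoped MatrixOrder in
lemma Matrix.PosDef.exists_congr_one_and_diagonal {M₁ M₂ : Matrix ι ι ℝ} (h₁ : M₁.PosDef)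
    (h₂ : M₂.PosDef) :
    ∃ (P R : Matrix ι ι ℝ) (μ : ι → ℝ), (∀ j, 0 < μ j) ∧ Pᵀ * R = 1 ∧
      Pᵀ * M₁ * P = 1 ∧ Rᵀ * M₂ * R = diagonal μ := by
  obtain ⟨hS, hSS⟩ := CStarAlgebra.isStrictlyPositive_iff_isUnit_sqrt_and_eq_sqrt_mul_sqrt.mp
    h₁.isStrictlyPositive
  have hST : (CFC.sqrt M₁)ᵀ = CFC.sqrt M₁ := by
    simpa [conjTranspose_eq_transpose_of_trivial] using (CFC.sqrt_nonneg M₁).posSemidef.1.eq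
  set S := CFC.sqrt M₁
  have hA : (S * M₂ * S).PosDef := by
    simpa [conjTranspose_eq_transpose_of_trivial, hST] using
      h₂.conjTranspose_mul_mul_same (B := S) (mulVec_injective_iff_isUnit.mpr hS)
  set U : Matrix ι ι ℝ := (hA.1.eigenvectorUnitary : Matrix ι ι ℝ)
  have hUU : Uᵀ * U = 1 := by
    simpa [star_eq_conjTranspose, conjTranspose_eq_transpose_of_trivial] using
      Unitary.coe_star_mul_self hA.1.eigenvectorUnitary
  have hdiag : Uᵀ * (S * M₂ * S) * U = diagonal hA.1.eigenvalues := by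
    simpa [star_eq_conjTranspose, conjTranspose_eq_transpose_of_trivial] using
      hA.1.conjStarAlgAut_star_eigenvectorUnitary
  have hSdet : IsUnit S.det := (isUnit_iff_isUnit_det S).mp hS
  refine ⟨S⁻¹ * U, S * U, hA.1.eigenvalues, hA.eigenvalues_pos, ?_, ?_, ?_⟩
  · rw [transpose_mul, transpose_nonsing_inv, hST, mul_assoc, ← mul_assoc S⁻¹,
      nonsing_inv_mul S hSdet, one_mul, hUU]
  · rw [transpose_mul, transpose_nonsing_inv, hST]
    calc Uᵀ * S⁻¹ * M₁ * (S⁻¹ * U) = Uᵀ * (S⁻¹ * S) * (S * S⁻¹) * U := by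
          rw [hSS]; simp only [Matrix.mul_assoc]
      _ = 1 := by rw [nonsing_inv_mul S hSdet, mul_nonsing_inv S hSdet]; simpa using hUU
  · rw [transpose_mul, hST, ← hdiag]; simp only [Matrix.mul_assoc]

lemma Matrix.PosDef.exists_biorthogonal_hconjonal {M₁ M₂ : Matrix ι ι ℝ} (h₁ : M₁.PosDef)
    (h₂ : M₂.PosDef) :
    ∃ (P R : Matrix ι ι ℝ) (lam : ι → ℝ), (∀ j, 0 < lam j) ∧ Pᵀ * R = 1 ∧
      Pᵀ * M₁ * P = diagonal lam ∧ Rᵀ * M₂ * R = diagonal lam := by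
  obtain ⟨P, R, μ, hμ, hPR, hP, hR⟩ := h₁.exists_congr_one_and_diagonal h₂
  set c : ι → ℝ := fun j => √√(μ j)
  have hc : ∀ j, c j ≠ 0 := fun j => (Real.sqrt_pos.2 (Real.sqrt_pos.2 (hμ j))).ne'
  have hcc : ∀ j, c j * c j = √(μ j) := fun j => Real.mul_self_sqrt (Real.sqrt_nonneg _)
  have hconj : ∀ (A M : Matrix ι ι ℝ) (d : ι → ℝ),
      (A * diagonal d)ᵀ * M * (A * diagonal d) = diagonal d * (Aᵀ * M * A) * diagonal d := by
    intro A M d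
    simp only [transpose_mul, diagonal_transpose, Matrix.mul_assoc]
  refine ⟨P * diagonal c, R * diagonal c⁻¹, fun j => √(μ j), fun j => Real.sqrt_pos.2 (hμ j),
    ?_, ?_, ?_⟩
  · rw [transpose_mul, diagonal_transpose, Matrix.mul_assoc, ← Matrix.mul_assoc Pᵀ, hPR,
      Matrix.one_mul, diagonal_mul_diagonal, ← diagonal_one]
    exact congrArg diagonal (funext fun j => mul_inv_cancel₀ (hc j))
  · rw [hconj, hP, Matrix.mul_one, diagonal_mul_diagonal]
    exact congrArg diagonal (funext hcc)
  · rw [hconj, hR, diagonal_mul_diagonal, diagonal_mul_diagonal]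
    refine congrArg diagonal (funext fun j => ?_)
    simp only [Pi.inv_apply]
    rw [mul_comm, ← mul_assoc, ← mul_inv, hcc, mul_comm, ← div_eq_mul_inv, Real.div_sqrt]

lemma Matrix.dotProduct_diagonal_mulVec_self (lam x : ι → ℝ) :
    x ⬝ᵥ diagonal lam *ᵥ x = ∑ j, lam j * x j ^ 2 := by
  simp only [mulVec_diagonal, dotProduct]
  exact Finset.sum_congr rfl fun j _ => by ring

lemma QuadraticForm.apply_eq_dotProduct_toMatrix'_mulVec {R : Type*} [CommRing R]
    [Invertible (2 : R)] (Q : QuadraticForm R (ι → R)) (x : ι → R) :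
    Q x = x ⬝ᵥ Q.toMatrix' *ᵥ x := by
  rw [QuadraticForm.toMatrix', ← Matrix.toLinearMap₂'_apply', Matrix.toLinearMap₂'_toMatrix',
    QuadraticMap.associated_eq_self_apply]

lemma LinearMap.exists_posDef_apply_self_eq_dotProduct
    (D : EuclideanSpace ℝ ι →ₗ[ℝ] EuclideanSpace ℝ ι →ₗ[ℝ] ℝ) (hD : ∀ z, z ≠ 0 → 0 < D z z) :
    ∃ M : Matrix ι ι ℝ, M.PosDef ∧
      ∀ x : ι → ℝ, D (WithLp.toLp 2 x) (WithLp.toLp 2 x) = x ⬝ᵥ M *ᵥ x := by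
  let L : (ι → ℝ) →ₗ[ℝ] EuclideanSpace ℝ ι := (WithLp.linearEquiv 2 ℝ (ι → ℝ)).symm
  let q : QuadraticForm ℝ (ι → ℝ) := LinearMap.BilinMap.toQuadraticMap (D.compl₁₂ L L)
  have hq : ∀ x, q x = D (WithLp.toLp 2 x) (WithLp.toLp 2 x) := fun x => rfl
  refine ⟨q.toMatrix', QuadraticForm.posDef_toMatrix' fun x hx => ?_, fun x => ?_⟩
  · rw [hq]
    exact hD _ (by simpa using hx)
  · rw [← hq, q.apply_eq_dotProduct_toMatrix'_mulVec]

theorem LinearMap.exists_biorthogonal_diagonalization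
    (B₁ B₂ : EuclideanSpace ℝ ι →ₗ[ℝ] EuclideanSpace ℝ ι →ₗ[ℝ] ℝ)
    (h₁ : ∀ z, z ≠ 0 → 0 < B₁ z z) (h₂ : ∀ z, z ≠ 0 → 0 < B₂ z z) :
    ∃ (P R : Matrix ι ι ℝ) (lam : ι → ℝ), (∀ j, 0 < lam j) ∧ Pᵀ * R = 1 ∧
      (∀ z, B₁ (WithLp.toLp 2 (P *ᵥ z)) (WithLp.toLp 2 (P *ᵥ z)) = ∑ j, lam j * z j ^ 2) ∧
      (∀ ζ, B₂ (WithLp.toLp 2 (R *ᵥ ζ)) (WithLp.toLp 2 (R *ᵥ ζ)) = ∑ j, lam j * ζ j ^ 2) := by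
  obtain ⟨M₁, hM₁, hB₁⟩ := B₁.exists_posDef_apply_self_eq_dotProduct h₁
  obtain ⟨M₂, hM₂, hB₂⟩ := B₂.exists_posDef_apply_self_eq_dotProduct h₂
  obtain ⟨P, R, lam, hlam, hPR, hP, hR⟩ := hM₁.exists_biorthogonal_hconjonal hM₂
  refine ⟨P, R, lam, hlam, hPR, fun z => ?_, fun ζ => ?_⟩
  · rw [hB₁, dotProduct_mulVec_mulVec_self, hP, dotProduct_diagonal_mulVec_self]
  · rw [hB₂, dotProduct_mulVec_mulVec_self, hR, dotProduct_diagonal_mulVec_self]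

end Diagonalization

lemma sum_smul_inl_add_sum_smul_inr {n : ℕ} (P R : Matrix (Fin n) (Fin n) ℝ)
    (z ζ : Fin n → ℝ) :
    (∑ j, z j • ((WithLp.toLp 2 (Pᵀ j), 0) : W n)) +
        ∑ j, ζ j • ((0, WithLp.toLp 2 (Rᵀ j)) : W n) =
      (WithLp.toLp 2 (P *ᵥ z), WithLp.toLp 2 (R *ᵥ ζ)) := by
  ext i <;> simp [Prod.fst_sum, Prod.snd_sum, mulVec, dotProduct, mul_comm]

theorem statement10_general (n : ℕ) (Q : W n → ℝ)
    (hsplit : ∃ (B₁ B₂ : V n →ₗ[ℝ] V n →ₗ[ℝ] ℝ),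
      (∀ z : V n, z ≠ 0 → 0 < B₁ z z) ∧ (∀ ζ : V n, ζ ≠ 0 → 0 < B₂ ζ ζ) ∧
      ∀ z ζ : V n, Q (z, ζ) = B₁ z z + B₂ ζ ζ) :
    ∃ (e ε' : Fin n → W n) (lam : Fin n → ℝ),
      (∀ j, 0 < lam j) ∧
      (∀ j, (e j).2 = 0) ∧ (∀ j, (ε' j).1 = 0) ∧
      LinearIndependent ℝ e ∧
      (∀ j k, symp (e j) (e k) = 0) ∧
      (∀ j k, symp (ε' j) (ε' k) = 0) ∧
      (∀ j k, symp (e j) (ε' k) = -(if j = k then (1:ℝ) else 0)) ∧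
      ∀ z ζ : Fin n → ℝ,
        Q ((∑ j, z j • e j) + ∑ j, ζ j • ε' j) =
          ∑ j, lam j * ((z j) ^ 2 + (ζ j) ^ 2) := by
  obtain ⟨B₁, B₂, h₁, h₂, hQ⟩ := hsplit
  obtain ⟨P, R, lam, hlam, hPR, hP, hR⟩ := B₁.exists_biorthogonal_diagonalization B₂ h₁ h₂
  refine ⟨fun j => (WithLp.toLp 2 (Pᵀ j), 0), fun j => (0, WithLp.toLp 2 (Rᵀ j)), lam, hlam,
    fun j => rfl, fun j => rfl, ?_, fun j k => by simp [symp], fun j k => by simp [symp],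
    fun j k => ?_, fun z ζ => ?_⟩
  · have hrows : LinearIndependent ℝ Pᵀ.row :=
      linearIndependent_rows_iff_isUnit.2 (IsUnit.of_mul_eq_one R hPR)
    exact hrows.map' (LinearMap.inl ℝ (V n) (V n) ∘ₗ (WithLp.linearEquiv 2 ℝ (Fin n → ℝ)).symm)
      (LinearMap.ker_eq_bot.2
        (LinearMap.inl_injective.comp (WithLp.linearEquiv 2 ℝ _).symm.injective))
  · simpa [symp, mul_apply, one_apply] using congrFun (congrFun hPR j) k
  · rw [sum_smul_inl_add_sum_smul_inr, hQ, hP, hR, ← Finset.sum_add_distrib]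
    exact Finset.sum_congr rfl fun j _ => by ring

/-- Lemma `G0lemma`: a splitted positive definite quadratic form
on `ℝ²ⁿ` can be diagonalized by a splitted symplectic basis. -/
theorem statement10 (n : ℕ) (Q : W n → ℝ)
    (B : W n →ₗ[ℝ] W n →ₗ[ℝ] ℝ) (hQB : ∀ Z : W n, Q Z = B Z Z)
    (hpos : ∀ Z : W n, Z ≠ 0 → 0 < Q Z)
    (hsplit : ∃ (B₁ B₂ : V n →ₗ[ℝ] V n →ₗ[ℝ] ℝ),
      (∀ z : V n, z ≠ 0 → 0 < B₁ z z) ∧ (∀ ζ : V n, ζ ≠ 0 → 0 < B₂ ζ ζ) ∧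
      ∀ z ζ : V n, Q (z, ζ) = B₁ z z + B₂ ζ ζ) :
    ∃ (e ε' : Fin n → W n) (lam : Fin n → ℝ),
      (∀ j, 0 < lam j) ∧
      (∀ j, (e j).2 = 0) ∧ (∀ j, (ε' j).1 = 0) ∧
      LinearIndependent ℝ e ∧
      (∀ j k, symp (e j) (e k) = 0) ∧
      (∀ j k, symp (ε' j) (ε' k) = 0) ∧
      (∀ j k, symp (e j) (ε' k) = -(if j = k then (1:ℝ) else 0)) ∧
      ∀ z ζ : Fin n → ℝ,
        Q ((∑ j, z j • e j) + ∑ j, ζ j • ε' j) =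
          ∑ j, lam j * ((z j) ^ 2 + (ζ j) ^ 2) :=
  statement10_general n Q hsplit

end
end

section
/- Let g be a positive definite quadratic form on ℝ^{2n} with standard symplectic form σ, and suppose there exist linear symplectic coordinates in which g(Z) = Σ_{j=1}^n λ_j (z_j² + ζ_j²) with λ₁ ≥ λ₂ ≥ … ≥ λ_n > 0. Then for each j ∈ {1,…,n}, λ_j = inf over all symplectic subspaces W_j ⊆ ℝ^{2n} of dimension 2(n − j + 1) of sup_{Y ∈ W_j, Y ≠ 0} (g(Y)/g^σ(Y))^{1/2}, where a linear subspace is called symplectic if the restriction of σ to it is nondegenerate, and g^σ(Z) = sup_{Y ≠ 0} σ(Y,Z)²/g(Y). In particular the numbers λ_j depend only on g and not on the choice of diagonalizing symplectic coordinates. -/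
open MeasureTheory Complex Filter Topology
open scoped BigOperators ENNReal

noncomputable section

/-- The dual of a single quadratic form with respect to the symplectic form. -/
def dualQ {n : ℕ} (Q : W n → ℝ) (Z : W n) : ℝ :=
  ⨆ Y : {Y : W n // Y ≠ 0}, (symp Y.1 Z) ^ 2 / Q Y.1

/-- A subspace of `W n` is symplectic if `σ` restricted to it is nondegenerate. -/
def IsSympSubspace {n : ℕ} (Wj : Submodule ℝ (W n)) : Prop :=
  ∀ Y ∈ Wj, (∀ Z ∈ Wj, symp Y Z = 0) → Y = 0


/-!
By symplectic invariance of `Q ↦ Q^σ`, pulling back along `T` reduces everything to the diagonal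
form `q = ∑ λ_k (z_k² + ζ_k²)`, whose dual is `∑ λ_k⁻¹ (z_k² + ζ_k²)` (Cauchy–Schwarz, with
equality at an explicit vector). On a vector supported in the coordinate planes `k ∈ s` the ratio
`q / q^σ` is then a weighted mean of the `λ_k²`, so it lies between `min_s λ_k²` and `max_s λ_k²`.
The span of the planes `k ≥ j` is a symplectic subspace of the right dimension on which the ratio
is at most `λ_j²`, while, by a dimension count, any subspace of that dimension meets the span of
the planes `k ≤ j` nontrivially, where the ratio is at least `λ_j²`: this is the Courant–Fischer
argument.
-/

open Module Submodule

section Diagonal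

variable {n : ℕ}

def diagForm (w : Fin n → ℝ) (Z : W n) : ℝ := ∑ k, w k * (Z.1 k ^ 2 + Z.2 k ^ 2)

variable {w : Fin n → ℝ}

@[simp]
lemma diagForm_zero : diagForm w (0 : W n) = 0 := by
  simp [diagForm]

lemma diagForm_nonneg (hw : ∀ k, 0 ≤ w k) (Z : W n) : 0 ≤ diagForm w Z :=
  Finset.sum_nonneg fun k _ => mul_nonneg (hw k) (by positivity)

lemma diagForm_pos (hw : ∀ k, 0 < w k) {Z : W n} (hZ : Z ≠ 0) : 0 < diagForm w Z := by
  refine (diagForm_nonneg (fun k => (hw k).le) Z).lt_of_ne fun h => hZ ?_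
  have hk := (Finset.sum_eq_zero_iff_of_nonneg fun k _ =>
    mul_nonneg (hw k).le (by positivity)).mp h.symm
  have hcoord : ∀ k, Z.1 k = 0 ∧ Z.2 k = 0 := fun k => by
    have := (mul_eq_zero.mp (hk k (Finset.mem_univ k))).resolve_left (hw k).ne'
    simpa using (add_eq_zero_iff_of_nonneg (sq_nonneg _) (sq_nonneg _)).mp this
  exact Prod.ext (PiLp.ext fun k => (hcoord k).1) (PiLp.ext fun k => (hcoord k).2)

lemma symp_eq_sum (Y Z : W n) : symp Y Z = ∑ k, (Z.1 k * Y.2 k - Y.1 k * Z.2 k) :=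
  (Finset.sum_sub_distrib ..).symm

lemma symp_sq_le_diagForm_mul (hw : ∀ k, 0 < w k) (Y Z : W n) :
    symp Y Z ^ 2 ≤ diagForm w Y * diagForm w⁻¹ Z := by
  rw [symp_eq_sum]
  refine Finset.sum_sq_le_sum_mul_sum_of_sq_le_mul _
    (fun k _ => mul_nonneg (hw k).le (by positivity))
    (fun k _ => mul_nonneg (inv_nonneg.mpr (hw k).le) (by positivity)) fun k _ => ?_
  rw [Pi.inv_apply, mul_mul_mul_comm, mul_inv_cancel₀ (hw k).ne', one_mul]
  nlinarith [sq_nonneg (Y.1 k * Z.1 k + Y.2 k * Z.2 k)]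

lemma dualQ_diagForm (hw : ∀ k, 0 < w k) (Z : W n) :
    dualQ (diagForm w) Z = diagForm w⁻¹ Z := by
  have hw' : ∀ k, 0 ≤ w⁻¹ k := fun k => inv_nonneg.mpr (hw k).le
  have hle : ∀ Y : {Y : W n // Y ≠ 0}, symp Y.1 Z ^ 2 / diagForm w Y.1 ≤ diagForm w⁻¹ Z :=
    fun Y => div_le_of_le_mul₀ (diagForm_nonneg (fun k => (hw k).le) _) (diagForm_nonneg hw' _)
      ((symp_sq_le_diagForm_mul hw Y.1 Z).trans_eq (mul_comm _ _))
  refine le_antisymm (Real.iSup_le hle (diagForm_nonneg hw' _)) ?_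
  rcases eq_or_ne Z 0 with rfl | hZ
  · rw [diagForm_zero]
    exact Real.iSup_nonneg fun Y =>
      div_nonneg (sq_nonneg _) (diagForm_nonneg (fun k => (hw k).le) Y.1)
  -- the supremum is attained at `Y = (-w⁻¹ ζ, w⁻¹ z)` for `Z = (z, ζ)`
  set Y₀ : W n :=
    (WithLp.toLp 2 fun k => -((w k)⁻¹ * Z.2 k), WithLp.toLp 2 fun k => (w k)⁻¹ * Z.1 k)
  have hsymp : symp Y₀ Z = diagForm w⁻¹ Z := by
    rw [symp_eq_sum]
    refine Finset.sum_congr rfl fun k _ => ?_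
    simp only [Y₀, Pi.inv_apply]
    ring
  have hform : diagForm w Y₀ = diagForm w⁻¹ Z := by
    refine Finset.sum_congr rfl fun k _ => ?_
    simp only [Y₀, Pi.inv_apply]
    field_simp [(hw k).ne']
    ring
  have hY₀ : Y₀ ≠ 0 := fun h => (diagForm_pos (w := w⁻¹) (fun k => inv_pos.mpr (hw k)) hZ).ne'
    (by rw [← hform, h, diagForm_zero])
  calc diagForm w⁻¹ Z = symp Y₀ Z ^ 2 / diagForm w Y₀ := by
        rw [hsymp, hform, sq, mul_self_div_self]
    _ ≤ _ := le_ciSup (f := fun Y : {Y : W n // Y ≠ 0} => symp Y.1 Z ^ 2 / diagForm w Y.1)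
          ⟨_, Set.forall_mem_range.mpr hle⟩ ⟨Y₀, hY₀⟩

end Diagonal

section Coordinate

variable {n : ℕ}

def stdBasis (n : ℕ) : Basis (Fin n ⊕ Fin n) ℝ (W n) :=
  (EuclideanSpace.basisFun (Fin n) ℝ).toBasis.prod (EuclideanSpace.basisFun (Fin n) ℝ).toBasis

def coordSubspace (s : Finset (Fin n)) : Submodule ℝ (W n) :=
  span ℝ (stdBasis n '' ↑(s.disjSum s))

lemma mem_coordSubspace {s : Finset (Fin n)} {Z : W n} :
    Z ∈ coordSubspace s ↔ ∀ k ∉ s, Z.1 k = 0 ∧ Z.2 k = 0 := by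
  simp [coordSubspace, Basis.mem_span_image, Finset.subset_iff, stdBasis, Sum.forall,
    not_imp_comm, imp_and, forall_and]

lemma finrank_coordSubspace (s : Finset (Fin n)) :
    finrank ℝ (coordSubspace s) = 2 * s.card := by
  rw [coordSubspace, finrank_span_set_eq_card ((stdBasis n).linearIndepOn _).id_image,
    Set.toFinset_image, Finset.toFinset_coe,
    Finset.card_image_of_injective _ (stdBasis n).injective, Finset.card_disjSum, two_mul]

end Coordinate

section Ratio

variable {n : ℕ} {w : Fin n → ℝ} {s : Finset (Fin n)} {Z : W n} {μ : ℝ}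

lemma diagForm_le_sq_mul (hw : ∀ k, 0 < w k) (hZ : Z ∈ coordSubspace s)
    (hμ : ∀ k ∈ s, w k ≤ μ) : diagForm w Z ≤ μ ^ 2 * diagForm w⁻¹ Z := by
  rw [diagForm, diagForm, Finset.mul_sum]
  refine Finset.sum_le_sum fun k _ => ?_
  by_cases hk : k ∈ s
  · calc w k * (Z.1 k ^ 2 + Z.2 k ^ 2) = w k ^ 2 * ((w k)⁻¹ * (Z.1 k ^ 2 + Z.2 k ^ 2)) := by
          field_simp [(hw k).ne']
      _ ≤ μ ^ 2 * ((w k)⁻¹ * (Z.1 k ^ 2 + Z.2 k ^ 2)) := by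
          gcongr
          · exact mul_nonneg (inv_nonneg.mpr (hw k).le) (by positivity)
          · exact (hw k).le
          · exact hμ k hk
  · simp [mem_coordSubspace.mp hZ k hk]

lemma sq_mul_le_diagForm (hw : ∀ k, 0 < w k) (hZ : Z ∈ coordSubspace s) (hμ0 : 0 ≤ μ)
    (hμ : ∀ k ∈ s, μ ≤ w k) : μ ^ 2 * diagForm w⁻¹ Z ≤ diagForm w Z := by
  rw [diagForm, diagForm, Finset.mul_sum]
  refine Finset.sum_le_sum fun k _ => ?_
  by_cases hk : k ∈ s
  · calc μ ^ 2 * ((w k)⁻¹ * (Z.1 k ^ 2 + Z.2 k ^ 2))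
        ≤ w k ^ 2 * ((w k)⁻¹ * (Z.1 k ^ 2 + Z.2 k ^ 2)) := by
          gcongr
          · exact mul_nonneg (inv_nonneg.mpr (hw k).le) (by positivity)
          · exact hμ k hk
      _ = w k * (Z.1 k ^ 2 + Z.2 k ^ 2) := by field_simp [(hw k).ne']
  · simp [mem_coordSubspace.mp hZ k hk]

lemma sqrt_diagForm_div_le (hw : ∀ k, 0 < w k) (hZ : Z ∈ coordSubspace s) (hμ0 : 0 ≤ μ)
    (hμ : ∀ k ∈ s, w k ≤ μ) : √(diagForm w Z / diagForm w⁻¹ Z) ≤ μ :=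
  (Real.sqrt_le_left hμ0).mpr <| div_le_of_le_mul₀
    (diagForm_nonneg (fun k => inv_nonneg.mpr (hw k).le) Z) (sq_nonneg μ)
    (diagForm_le_sq_mul hw hZ hμ)

lemma le_sqrt_diagForm_div (hw : ∀ k, 0 < w k) (hZ : Z ∈ coordSubspace s) (hZ0 : Z ≠ 0)
    (hμ0 : 0 ≤ μ) (hμ : ∀ k ∈ s, μ ≤ w k) :
    μ ≤ √(diagForm w Z / diagForm w⁻¹ Z) :=
  (Real.le_sqrt hμ0 (div_nonneg (diagForm_nonneg (fun k => (hw k).le) Z)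
    (diagForm_nonneg (fun k => inv_nonneg.mpr (hw k).le) Z))).mpr <|
    (le_div_iff₀ (diagForm_pos (fun k => inv_pos.mpr (hw k)) hZ0)).mpr
    (sq_mul_le_diagForm hw hZ hμ0 hμ)

end Ratio

section Symplectic

variable {n : ℕ} {T : W n ≃ₗ[ℝ] W n}

lemma dualQ_map (hT : ∀ X Y : W n, symp (T X) (T Y) = symp X Y) (Q : W n → ℝ) (Z : W n) :
    dualQ Q (T Z) = dualQ (Q ∘ T) Z := by
  let e : {Y : W n // Y ≠ 0} ≃ {Y : W n // Y ≠ 0} :=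
    T.toEquiv.subtypeEquiv fun Y => (LinearEquiv.map_ne_zero_iff T).symm
  rw [dualQ, ← e.iSup_comp]
  simp [e, hT, dualQ]

lemma symp_self_rotate (Z : W n) : symp Z (Z.2, -Z.1) = ‖Z.1‖ ^ 2 + ‖Z.2‖ ^ 2 := by
  rw [EuclideanSpace.norm_sq_eq, EuclideanSpace.norm_sq_eq]
  simp [symp, sq, add_comm]

lemma isSympSubspace_map_coordSubspace (hT : ∀ X Y : W n, symp (T X) (T Y) = symp X Y)
    (s : Finset (Fin n)) : IsSympSubspace ((coordSubspace s).map (T : W n →ₗ[ℝ] W n)) := by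
  intro Y hY hperp
  obtain ⟨Z, hZ, rfl⟩ := mem_map.mp hY
  have hJZ : (Z.2, -Z.1) ∈ coordSubspace s := mem_coordSubspace.mpr fun k hk => by
    simp [mem_coordSubspace.mp hZ k hk]
  have h := hperp _ (mem_map_of_mem hJZ)
  simp only [LinearEquiv.coe_coe, hT, symp_self_rotate] at h
  obtain ⟨h1, h2⟩ := (add_eq_zero_iff_of_nonneg (sq_nonneg _) (sq_nonneg _)).mp h
  simp_all [Prod.ext_iff]

end Symplectic

section Diagonalized

def supRatio {n : ℕ} (Q : W n → ℝ) (E : Submodule ℝ (W n)) : ℝ :=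
  ⨆ Y : {Y : E // (Y : W n) ≠ 0}, √(Q Y / dualQ Q Y)

variable {n : ℕ} {Q : W n → ℝ} {T : W n ≃ₗ[ℝ] W n} {lam : Fin n → ℝ}
  (hT : ∀ X Y : W n, symp (T X) (T Y) = symp X Y) (hlam0 : ∀ k, 0 < lam k)
  (hdiag : ∀ Z : W n, Q (T Z) = diagForm lam Z)
include hT hlam0 hdiag

lemma sqrt_div_dualQ_apply_eq (Z : W n) :
    √(Q (T Z) / dualQ Q (T Z)) = √(diagForm lam Z / diagForm lam⁻¹ Z) := by
  rw [dualQ_map hT, show Q ∘ T = diagForm lam from funext hdiag, dualQ_diagForm hlam0, hdiag]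

lemma supRatio_map_coordSubspace_le {s : Finset (Fin n)} {μ : ℝ} (hμ0 : 0 ≤ μ)
    (hμ : ∀ k ∈ s, lam k ≤ μ) :
    supRatio Q ((coordSubspace s).map (T : W n →ₗ[ℝ] W n)) ≤ μ := by
  refine Real.iSup_le (fun ⟨⟨Y, hY⟩, _⟩ => ?_) hμ0
  obtain ⟨Z, hZ, rfl⟩ := mem_map.mp hY
  change √(Q (T Z) / dualQ Q (T Z)) ≤ μ
  rw [sqrt_div_dualQ_apply_eq hT hlam0 hdiag]
  exact sqrt_diagForm_div_le hlam0 hZ hμ0 hμ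

lemma le_supRatio_of_finrank (hmono : ∀ j k : Fin n, j ≤ k → lam k ≤ lam j) (j : Fin n)
    {E : Submodule ℝ (W n)} (hE : finrank ℝ E = 2 * (n - j)) : lam j ≤ supRatio Q E := by
  -- dimension count: `E` meets the image of the first `j + 1` coordinate planes
  obtain ⟨Y, hYE, hYF, hY0⟩ : ∃ Y ∈ E,
      Y ∈ (coordSubspace (Finset.Iic j)).map (T : W n →ₗ[ℝ] W n) ∧ Y ≠ 0 := by
    by_contra! h
    have := finrank_add_finrank_le_of_disjoint (disjoint_def.mpr h)
    rw [hE, LinearEquiv.finrank_map_eq, finrank_coordSubspace, Fin.card_Iic, finrank_prod,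
      finrank_euclideanSpace_fin] at this
    omega
  have hbdd : BddAbove (Set.range fun Y : {Y : E // (Y : W n) ≠ 0} =>
      √(Q Y / dualQ Q Y)) := by
    refine ⟨lam ⟨0, j.pos⟩, Set.forall_mem_range.mpr fun Y => ?_⟩
    rw [← T.apply_symm_apply Y, sqrt_div_dualQ_apply_eq hT hlam0 hdiag]
    exact sqrt_diagForm_div_le (s := Finset.univ) hlam0 (mem_coordSubspace.mpr (by simp))
      (hlam0 _).le fun k _ => hmono _ k (Nat.zero_le _)
  obtain ⟨Z, hZ, rfl⟩ := mem_map.mp hYF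
  calc lam j ≤ √(Q (T Z) / dualQ Q (T Z)) := by
        rw [sqrt_div_dualQ_apply_eq hT hlam0 hdiag]
        exact le_sqrt_diagForm_div hlam0 hZ (by rintro rfl; simp at hY0) (hlam0 j).le
          fun k hk => hmono k j (Finset.mem_Iic.mp hk)
    _ ≤ supRatio Q E := le_ciSup hbdd ⟨⟨T Z, hYE⟩, hY0⟩

end Diagonalized

theorem statement11_general (n : ℕ) (Q : W n → ℝ)
    (T : W n ≃ₗ[ℝ] W n) (hT : ∀ X Y : W n, symp (T X) (T Y) = symp X Y)
    (lam : Fin n → ℝ) (hlam0 : ∀ j, 0 < lam j)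
    (hmono : ∀ j k : Fin n, j ≤ k → lam k ≤ lam j)
    (hdiag : ∀ Z : W n, Q (T Z) = ∑ j, lam j * ((Z.1 j) ^ 2 + (Z.2 j) ^ 2)) :
    ∀ j : Fin n, lam j =
      sInf {r : ℝ | ∃ Wj : Submodule ℝ (W n), IsSympSubspace Wj ∧
        Module.finrank ℝ Wj = 2 * (n - (j : ℕ)) ∧
        r = ⨆ Y : {Y : Wj // (Y : W n) ≠ 0},
          Real.sqrt (Q (Y.1 : W n) / dualQ Q (Y.1 : W n))} := by
  intro j
  set E := (coordSubspace (Finset.Ici j)).map (T : W n →ₗ[ℝ] W n)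
  have hE : finrank ℝ E = 2 * (n - j) := by
    rw [LinearEquiv.finrank_map_eq, finrank_coordSubspace, Fin.card_Ici]
  have hEj : supRatio Q E = lam j :=
    le_antisymm (supRatio_map_coordSubspace_le hT hlam0 hdiag (hlam0 j).le
        fun k hk => hmono j k (Finset.mem_Ici.mp hk))
      (le_supRatio_of_finrank hT hlam0 hdiag hmono j hE)
  symm
  refine IsLeast.csInf_eq ⟨⟨E, isSympSubspace_map_coordSubspace hT _, hE, hEj.symm⟩, ?_⟩
  rintro _ ⟨F, -, hF, rfl⟩
  exact le_supRatio_of_finrank hT hlam0 hdiag hmono j hF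

/-- proof of Proposition `massinv`: the symplectic eigenvalues
`λ_j` of a positive definite quadratic form are given by the inf-sup formula over
symplectic subspaces, hence do not depend on the diagonalizing symplectic
coordinates. -/
theorem statement11 (n : ℕ) (Q : W n → ℝ)
    (B : W n →ₗ[ℝ] W n →ₗ[ℝ] ℝ) (hQB : ∀ Z : W n, Q Z = B Z Z)
    (hpos : ∀ Z : W n, Z ≠ 0 → 0 < Q Z)
    (T : W n ≃ₗ[ℝ] W n) (hT : ∀ X Y : W n, symp (T X) (T Y) = symp X Y)
    (lam : Fin n → ℝ) (hlam0 : ∀ j, 0 < lam j)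
    (hmono : ∀ j k : Fin n, j ≤ k → lam k ≤ lam j)
    (hdiag : ∀ Z : W n, Q (T Z) = ∑ j, lam j * ((Z.1 j) ^ 2 + (Z.2 j) ^ 2)) :
    ∀ j : Fin n, lam j =
      sInf {r : ℝ | ∃ Wj : Submodule ℝ (W n), IsSympSubspace Wj ∧
        Module.finrank ℝ Wj = 2 * (n - (j : ℕ)) ∧
        r = ⨆ Y : {Y : Wj // (Y : W n) ≠ 0},
          Real.sqrt (Q (Y.1 : W n) / dualQ Q (Y.1 : W n))} :=
  statement11_general n Q T hT lam hlam0 hmono hdiag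
end
end

section
/- Let g be a Riemannian metric on W = ℝ^{2n} and for X ∈ W and 1 ≤ j ≤ n define λ_j(X) = inf over all symplectic subspaces W_j ⊆ ℝ^{2n} of dimension 2(n − j + 1) of sup_{Y ∈ W_j, Y ≠ 0} (g_X(Y)/g^σ_X(Y))^{1/2}, and Λ_g(X) = λ₁(X)⋯λ_n(X). Then: (a) if g is slowly varying, then each λ_j and Λ_g are g-continuous; (b) if g is slowly varying and σ-temperate, then each λ_j and Λ_g are (σ,g)-temperate. -/
open MeasureTheory Complex Filter Topology
open scoped BigOperators ENNReal

noncomputable section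

/-- The `j`-th symplectic eigenvalue of `g_X`, via the inf-sup characterization. -/
def lamJ {n : ℕ} (g : RMetric n) (j : Fin n) (X : W n) : ℝ :=
  sInf {r : ℝ | ∃ Wj : Submodule ℝ (W n), IsSympSubspace Wj ∧
    Module.finrank ℝ Wj = 2 * (n - (j : ℕ)) ∧
    r = ⨆ Y : {Y : Wj // (Y : W n) ≠ 0},
      Real.sqrt (g.val X (Y.1 : W n) / dualM g X (Y.1 : W n))}

/-- `Λ_g(X) = λ₁(X) ⋯ λ_n(X)`. -/
def LambdaJ {n : ℕ} (g : RMetric n) (X : W n) : ℝ := ∏ j : Fin n, lamJ g j X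

/-!
The symplectic eigenvalues see `g_X` only through the ratio `g_X / g^σ_X`, and passing to the
dual metric reverses inequalities: if `g_X ≤ A g_Y` then `g^σ_Y ≤ A g^σ_X`, so the ratio at `X` is
at most `A²` times the ratio at `Y`. Taking square roots, sups and infs gives
`λ_j(X) ≤ A λ_j(Y)` and `Λ_g(X) ≤ Aⁿ Λ_g(Y)`. Slow variation provides a constant `A` on
`g`-balls of a fixed radius, which is `g`-continuity. σ-temperance provides
`A = C (1 + g^σ_X(X - Y))^N`; comparing `g^σ_X` with `g^σ_Y` through the same factor trades the
weight at `X` for a power of the weight at `Y`, which is `(σ,g)`-temperance.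
-/

section RealBounds

variable {ι : Type*} {f h : ι → ℝ} {A B : ℝ}

-- The reverse bound `h ≤ B f` is what makes `⨆ f` and `⨆ h` bounded or unbounded together;
-- in `ℝ` an unbounded supremum is `0`.
theorem iSup_le_mul_iSup_of_forall_le_mul (hA : 0 ≤ A) (hB : 0 ≤ B) (h0 : ∀ i, 0 ≤ h i)
    (hfh : ∀ i, f i ≤ A * h i) (hhf : ∀ i, h i ≤ B * f i) : ⨆ i, f i ≤ A * ⨆ i, h i := by
  by_cases hf : BddAbove (Set.range f)
  · have hh : BddAbove (Set.range h) :=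
      ⟨B * ⨆ i, f i, Set.forall_mem_range.2 fun i =>
        (hhf i).trans (mul_le_mul_of_nonneg_left (le_ciSup hf i) hB)⟩
    exact Real.iSup_le (fun i => (hfh i).trans (mul_le_mul_of_nonneg_left (le_ciSup hh i) hA))
      (mul_nonneg hA (Real.iSup_nonneg h0))
  · rw [Real.iSup_of_not_bddAbove hf]
    exact mul_nonneg hA (Real.iSup_nonneg h0)

theorem iInf_le_mul_iInf_of_forall_le_mul (hA : 0 < A) (hf0 : ∀ i, 0 ≤ f i)
    (hfh : ∀ i, f i ≤ A * h i) : ⨅ i, f i ≤ A * ⨅ i, h i := by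
  cases isEmpty_or_nonempty ι
  · simp
  · have hbdd : BddBelow (Set.range f) := ⟨0, Set.forall_mem_range.2 hf0⟩
    rw [← div_le_iff₀' hA]
    refine le_ciInf fun i => ?_
    rw [div_le_iff₀' hA]
    exact (ciInf_le hbdd i).trans (hfh i)

theorem div_le_sq_mul_div {a b c d : ℝ} (hA : 0 ≤ A) (hb : 0 ≤ b) (hc : 0 ≤ c) (hd : 0 ≤ d)
    (hac : a ≤ A * c) (hdb : d ≤ A * b) (hbd : b ≤ B * d) : a / b ≤ A ^ 2 * (c / d) := by
  rcases hb.eq_or_lt with rfl | hb_pos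
  · simp only [div_zero]
    positivity
  have hd_pos : 0 < d := by
    by_contra! hd_nonpos
    rw [hd_nonpos.antisymm hd, mul_zero] at hbd
    linarith
  rw [div_le_iff₀ hb_pos, mul_div_assoc', div_mul_eq_mul_div, le_div_iff₀ hd_pos]
  nlinarith [mul_le_mul_of_nonneg_right hac hd_pos.le,
    mul_le_mul_of_nonneg_left hdb (mul_nonneg hA hc)]

end RealBounds

section Weights

variable {n : ℕ}

theorem symp_neg_right (Y Z : W n) : symp Y (-Z) = -symp Y Z := by
  simp only [symp, Prod.fst_neg, Prod.snd_neg, PiLp.neg_apply, neg_mul, mul_neg,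
    Finset.sum_neg_distrib]
  ring

namespace RMetric

variable (g : RMetric n) {X Y : W n} {A B : ℝ}

theorem val_nonneg (X Z : W n) : 0 ≤ g.val X Z := by
  rcases eq_or_ne Z 0 with rfl | hZ
  · obtain ⟨b, hb⟩ := g.quad X
    simp [hb]
  · exact (g.posdef X Z hZ).le

theorem dualM_nonneg (X Z : W n) : 0 ≤ dualM g X Z :=
  Real.iSup_nonneg fun Y => div_nonneg (sq_nonneg _) (g.posdef X Y.1 Y.2).le

theorem dualM_neg (X Z : W n) : dualM g X (-Z) = dualM g X Z := by
  simp only [dualM, dualFn, symp_neg_right, neg_sq]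

theorem dualM_le_mul (hA : 0 ≤ A) (hB : 0 ≤ B) (hXY : ∀ Z, g.val X Z ≤ A * g.val Y Z)
    (hYX : ∀ Z, g.val Y Z ≤ B * g.val X Z) (Z : W n) : dualM g Y Z ≤ A * dualM g X Z := by
  have quotient_le {U U' : W n} {K : ℝ} (hK : 0 ≤ K) (hUU' : ∀ Z, g.val U Z ≤ K * g.val U' Z)
      (Y' : {Y' : W n // Y' ≠ 0}) :
      symp Y'.1 Z ^ 2 / g.val U' Y'.1 ≤ K * (symp Y'.1 Z ^ 2 / g.val U Y'.1) := by
    have hU := g.posdef U Y'.1 Y'.2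
    have hU' := g.posdef U' Y'.1 Y'.2
    rw [mul_div_assoc', div_le_div_iff₀ hU' hU]
    nlinarith [mul_le_mul_of_nonneg_left (hUU' Y'.1) (sq_nonneg (symp Y'.1 Z))]
  exact iSup_le_mul_iSup_of_forall_le_mul hA hB
    (fun Y' => div_nonneg (sq_nonneg _) (g.posdef X Y'.1 Y'.2).le)
    (quotient_le hA hXY) (quotient_le hB hYX)

theorem sqrt_div_dualM_le_mul (hA : 0 ≤ A) (hB : 0 ≤ B) (hXY : ∀ Z, g.val X Z ≤ A * g.val Y Z)
    (hYX : ∀ Z, g.val Y Z ≤ B * g.val X Z) {Z : W n} (hZ : Z ≠ 0) :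
    Real.sqrt (g.val X Z / dualM g X Z) ≤ A * Real.sqrt (g.val Y Z / dualM g Y Z) := by
  have hratio := div_le_sq_mul_div hA (g.dualM_nonneg X Z) (g.posdef Y Z hZ).le
    (g.dualM_nonneg Y Z) (hXY Z) (g.dualM_le_mul hA hB hXY hYX Z)
    (g.dualM_le_mul hB hA hYX hXY Z)
  calc Real.sqrt (g.val X Z / dualM g X Z)
      ≤ Real.sqrt (A ^ 2 * (g.val Y Z / dualM g Y Z)) := Real.sqrt_le_sqrt hratio
    _ = A * Real.sqrt (g.val Y Z / dualM g Y Z) := by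
      rw [Real.sqrt_mul (sq_nonneg A), Real.sqrt_sq hA]

end RMetric

theorem lamJ_eq_iInf (g : RMetric n) (j : Fin n) (X : W n) :
    lamJ g j X = ⨅ Wj : {Wj : Submodule ℝ (W n) //
        IsSympSubspace Wj ∧ Module.finrank ℝ Wj = 2 * (n - (j : ℕ))},
      ⨆ Y : {Y : Wj.1 // (Y : W n) ≠ 0},
        Real.sqrt (g.val X (Y.1 : W n) / dualM g X (Y.1 : W n)) := by
  rw [lamJ, iInf]
  congr 1
  ext r
  exact ⟨fun ⟨Wj, hs, hr, h⟩ => ⟨⟨Wj, hs, hr⟩, h.symm⟩,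
    fun ⟨⟨Wj, hs, hr⟩, h⟩ => ⟨Wj, hs, hr, h.symm⟩⟩

theorem lamJ_nonneg (g : RMetric n) (j : Fin n) (X : W n) : 0 ≤ lamJ g j X :=
  Real.sInf_nonneg fun _ ⟨_, _, _, hr⟩ => hr ▸ Real.iSup_nonneg fun _ => Real.sqrt_nonneg _

theorem LambdaJ_nonneg (g : RMetric n) (X : W n) : 0 ≤ LambdaJ g X :=
  Finset.prod_nonneg fun j _ => lamJ_nonneg g j X

def IsControlledByMetric (g : RMetric n) (m : W n → ℝ) (k : ℕ) : Prop :=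
  ∀ (X Y : W n) (A B : ℝ), 0 < A → 0 < B → (∀ Z, g.val X Z ≤ A * g.val Y Z) →
    (∀ Z, g.val Y Z ≤ B * g.val X Z) → m X ≤ A ^ k * m Y

theorem isControlledByMetric_lamJ (g : RMetric n) (j : Fin n) :
    IsControlledByMetric g (lamJ g j) 1 := by
  intro X Y A B hA hB hXY hYX
  rw [pow_one, lamJ_eq_iInf, lamJ_eq_iInf]
  refine iInf_le_mul_iInf_of_forall_le_mul hA
    (fun _ => Real.iSup_nonneg fun _ => Real.sqrt_nonneg _) fun Wj => ?_
  exact iSup_le_mul_iSup_of_forall_le_mul hA.le hB.le (fun _ => Real.sqrt_nonneg _)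
    (fun Z => g.sqrt_div_dualM_le_mul hA.le hB.le hXY hYX Z.2)
    (fun Z => g.sqrt_div_dualM_le_mul hB.le hA.le hYX hXY Z.2)

theorem isControlledByMetric_LambdaJ (g : RMetric n) :
    IsControlledByMetric g (LambdaJ g) n := by
  intro X Y A B hA hB hXY hYX
  calc LambdaJ g X ≤ ∏ j : Fin n, A * lamJ g j Y :=
        Finset.prod_le_prod (fun j _ => lamJ_nonneg g j X) fun j _ => by
          simpa using isControlledByMetric_lamJ g j X Y A B hA hB hXY hYX
    _ = A ^ n * LambdaJ g Y := by
        rw [Finset.prod_mul_distrib, Finset.prod_const, Finset.card_univ, Fintype.card_fin,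
          LambdaJ]

theorem IsSlowlyVarying.isGCont {g : RMetric n} (hg : IsSlowlyVarying g) {m : W n → ℝ} {k : ℕ}
    (hm : IsControlledByMetric g m k) : IsGCont g m := by
  obtain ⟨c, hc, C, hC, hsv⟩ := hg
  refine ⟨c, hc, C ^ k, pow_pos hC k, fun X Y hXY => ⟨?_, ?_⟩⟩
  · rw [inv_mul_le_iff₀ (pow_pos hC k)]
    exact hm Y X C C hC hC (fun Z => (inv_mul_le_iff₀ hC).1 (hsv X Y hXY Z).1)
      fun Z => (hsv X Y hXY Z).2
  · exact hm X Y C C hC hC (fun Z => (hsv X Y hXY Z).2)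
      fun Z => (inv_mul_le_iff₀ hC).1 (hsv X Y hXY Z).1

theorem IsSigmaTemperate.exists_one_le {g : RMetric n} (hg : IsSigmaTemperate g) :
    ∃ C ≥ (1 : ℝ), ∃ N : ℕ, ∀ X Y Z : W n,
      g.val Y Z ≤ C * (1 + dualM g Y (X - Y)) ^ N * g.val X Z := by
  obtain ⟨C, -, N, hC⟩ := hg
  refine ⟨max C 1, le_max_right _ _, N, fun X Y Z => (hC X Y Z).trans ?_⟩
  have hd := g.dualM_nonneg Y (X - Y)
  have hg := g.val_nonneg X Z
  rw [mul_right_comm]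
  gcongr
  exact le_max_left _ _

theorem IsSigmaTemperate.isSGTemperate {g : RMetric n} (hg : IsSigmaTemperate g)
    {m : W n → ℝ} {k : ℕ} (hm : IsControlledByMetric g m k) (hm0 : ∀ X, 0 ≤ m X) :
    IsSGTemperate g m := by
  obtain ⟨C, hC, N, hT⟩ := hg.exists_one_le
  refine ⟨(C ^ (N + 1)) ^ k, by positivity, N * (N + 1) * k, fun X Y => ?_⟩
  set dX := dualM g X (X - Y)
  set dY := dualM g Y (X - Y)
  have hdX : 0 ≤ dX := g.dualM_nonneg X (X - Y)
  have hdY : 0 ≤ dY := g.dualM_nonneg Y (X - Y)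
  have hDY : 1 ≤ C * (1 + dY) ^ N := one_le_mul_of_one_le_of_one_le hC (one_le_pow₀ (by linarith))
  have hYX : ∀ Z, g.val Y Z ≤ C * (1 + dY) ^ N * g.val X Z := hT X Y
  have hXY : ∀ Z, g.val X Z ≤ C * (1 + dX) ^ N * g.val Y Z := by
    simpa only [← neg_sub X Y, g.dualM_neg] using hT Y X
  -- `g^σ_X ≤ C (1 + dY)^N g^σ_Y` turns the weight at `X` into one at `Y`.
  have hdXY : 1 + dX ≤ C * (1 + dY) ^ (N + 1) := by
    have := g.dualM_le_mul (by positivity) (by positivity) hYX hXY (X - Y)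
    rw [pow_succ]
    nlinarith
  have bound {d : ℝ} (hd : 0 ≤ d) (hD : C * (1 + dX) ^ N ≤ C ^ (N + 1) * (1 + d) ^ (N * (N + 1))) :
      m X ≤ (C ^ (N + 1)) ^ k * m Y * (1 + d) ^ (N * (N + 1) * k) :=
    calc m X ≤ (C * (1 + dX) ^ N) ^ k * m Y :=
          hm X Y _ _ (by positivity) (by positivity) hXY hYX
      _ ≤ (C ^ (N + 1) * (1 + d) ^ (N * (N + 1))) ^ k * m Y := by
          gcongr
          exact hm0 Y
      _ = (C ^ (N + 1)) ^ k * m Y * (1 + d) ^ (N * (N + 1) * k) := by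
          rw [mul_pow, ← pow_mul]
          ring
  constructor
  · refine bound hdX (mul_le_mul ?_ ?_ (by positivity) (by positivity))
    · exact le_self_pow₀ hC (Nat.succ_ne_zero N)
    · exact pow_le_pow_right₀ (by linarith) (Nat.le_mul_of_pos_right N N.succ_pos)
  · refine bound hdY ?_
    calc C * (1 + dX) ^ N ≤ C * (C * (1 + dY) ^ (N + 1)) ^ N := by gcongr
      _ = C ^ (N + 1) * (1 + dY) ^ (N * (N + 1)) := by
          rw [mul_pow, ← pow_mul]
          ring

end Weights

/-- Proposition `massinv`(2),(3): if `g` is slowly varying then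
the `λ_j` and `Λ_g` are `g`-continuous; if `g` is moreover `σ`-temperate, they are
`(σ,g)`-temperate. -/
theorem statement12 (n : ℕ) (g : RMetric n) :
    (IsSlowlyVarying g →
      (∀ j : Fin n, IsGCont g (lamJ g j)) ∧ IsGCont g (LambdaJ g)) ∧
    (IsSlowlyVarying g → IsSigmaTemperate g →
      (∀ j : Fin n, IsSGTemperate g (lamJ g j)) ∧ IsSGTemperate g (LambdaJ g)) :=
  ⟨fun hsv => ⟨fun j => hsv.isGCont (isControlledByMetric_lamJ g j),
      hsv.isGCont (isControlledByMetric_LambdaJ g)⟩,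
    fun _ hT => ⟨fun j => hT.isSGTemperate (isControlledByMetric_lamJ g j) (lamJ_nonneg g j),
      hT.isSGTemperate (isControlledByMetric_LambdaJ g) (LambdaJ_nonneg g)⟩⟩
end
end

section
/- Let r, s ∈ ℝ and ρ, δ ∈ ℝ^{2n}, and define on W = ℝ^{2n} the Riemannian metric g_{(x,ξ)}(y,η) = Σ_{j=1}^n ⟨x⟩^{−2ρ_{n+j}} ⟨ξ⟩^{2δ_j} y_j² + Σ_{j=1}^n ⟨x⟩^{2δ_{n+j}} ⟨ξ⟩^{−2ρ_j} η_j² and the weight m(x,ξ) = ⟨x⟩^s ⟨ξ⟩^r, where ⟨x⟩ = (1+|x|²)^{1/2}. Then: g is splitted; the dual metric is g^σ_{(x,ξ)}(y,η) = Σ_{j=1}^n ⟨x⟩^{−2δ_{n+j}} ⟨ξ⟩^{2ρ_j} y_j² + Σ_{j=1}^n ⟨x⟩^{2ρ_{n+j}} ⟨ξ⟩^{−2δ_j} η_j²; the Planck function is h_g(x,ξ) = max_{1 ≤ j ≤ n} ⟨x⟩^{δ_{n+j} − ρ_{n+j}} ⟨ξ⟩^{δ_j − ρ_j}; if ρ ≤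 1 and 0 ≤ δ (componentwise) then g is slowly varying and m is g-continuous; if 0 ≤ δ ≤ ρ ≤ 1 (componentwise) then g is feasible; and if moreover δ < 1 (componentwise) then g is strongly feasible. -/
open MeasureTheory Complex Filter Topology
open scoped BigOperators ENNReal

noncomputable section

/-- The japanese bracket `⟨x⟩ = (1 + |x|²)^{1/2}`. -/
def jap {n : ℕ} (x : V n) : ℝ := Real.sqrt (1 + ‖x‖ ^ 2)

/-!
At each point `g` is a diagonal form `∑ A_j y_j² + ∑ B_j η_j²`. By Cauchy–Schwarz its symplectic
dual is `∑ B_j⁻¹ y_j² + ∑ A_j⁻¹ η_j²` (attained at `Y = (-η/A, y/B)`), i.e. `g^σ` is `g` with `ρ`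
and `δ` exchanged, and `h_g = max_j √(A_j B_j)`.

All other properties come from comparing brackets: if `⟨x⟩, ⟨x'⟩` and `⟨ξ⟩, ⟨ξ'⟩` agree up to a
factor `K`, then every coefficient of `g` changes by at most `K^(2(‖ρ‖ + ‖δ‖))`, and `m` similarly.
For `ρ ≤ 1` and `0 ≤ δ` the coefficients of `g_X` are at least `⟨x⟩⁻²`, `⟨ξ⟩⁻²`, so a small
`g_X(Y - X)` gives `|y - x| ≤ ⟨x⟩/2` and `K = 2`. For `0 ≤ ρ`, the coefficients of `g^σ_Y` are at
least `⟨y⟩^(-2d)`, `⟨η⟩^(-2d)` with `d = max δ < 1`, so `u = g^σ_Y(X - Y)` gives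
`|x - y| ≤ √(nu) ⟨y⟩^d`; since `d < 1` this yields `K ≲ (1 + u)^(1/(1-d))`.
-/

lemma Real.rpow_le_rpow_abs_mul_of_le_mul {s t K a : ℝ} (hs : 0 < s) (ht : 0 < t) (hK : 1 ≤ K)
    (hst : s ≤ K * t) (hts : t ≤ K * s) : s ^ a ≤ K ^ |a| * t ^ a := by
  have hK0 : 0 < K := one_pos.trans_le hK
  rcases le_total 0 a with ha | ha
  · rw [abs_of_nonneg ha, ← Real.mul_rpow hK0.le ht.le]
    exact Real.rpow_le_rpow hs.le hst ha
  · have h : K ^ a * s ^ a ≤ t ^ a := by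
      rw [← Real.mul_rpow hK0.le hs.le]
      exact Real.rpow_le_rpow_of_nonpos ht hts ha
    rw [abs_of_nonpos ha, Real.rpow_neg hK0.le, ← div_eq_inv_mul,
      le_div_iff₀ (Real.rpow_pos_of_pos hK0 a), mul_comm]
    exact h

lemma le_mul_of_le_add_mul_rpow {a b w d : ℝ} (ha : 1 ≤ a) (hb : 0 < b) (hw : 0 ≤ w)
    (hd : d < 1) (h : b ≤ a + w * b ^ d) : b ≤ (2 + (2 * w) ^ (1 - d)⁻¹) * a := by
  have hpow : 0 ≤ (2 * w) ^ (1 - d)⁻¹ := Real.rpow_nonneg (by positivity) _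
  rcases le_or_gt b (2 * a) with hb₂ | hb₂
  · nlinarith
  have hb₁ : b ^ (1 - d) ≤ 2 * w := by
    rw [Real.rpow_sub hb, Real.rpow_one, div_le_iff₀ (Real.rpow_pos_of_pos hb d)]
    linarith
  have hb₃ : b ≤ (2 * w) ^ (1 - d)⁻¹ :=
    calc b = (b ^ (1 - d)) ^ (1 - d)⁻¹ := (Real.rpow_rpow_inv hb.le (by linarith)).symm
      _ ≤ (2 * w) ^ (1 - d)⁻¹ :=
        Real.rpow_le_rpow (Real.rpow_nonneg hb.le _) hb₁ (inv_nonneg.mpr (by linarith))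
  nlinarith

lemma exists_le_lt_forall_le_of_forall_lt {ι : Type*} [Finite ι] {f : ι → ℝ} {a b : ℝ}
    (hab : b < a) (hf : ∀ i, f i < a) : ∃ d, b ≤ d ∧ d < a ∧ ∀ i, f i ≤ d := by
  rcases isEmpty_or_nonempty ι with hι | hι
  · exact ⟨b, le_rfl, hab, isEmptyElim⟩
  · obtain ⟨i₀, hi₀⟩ := Finite.exists_max f
    exact ⟨max b (f i₀), le_max_left _ _, max_lt hab (hf i₀),
      fun i => (hi₀ i).trans (le_max_right _ _)⟩

section

variable {n : ℕ}

lemma one_le_jap (x : V n) : 1 ≤ jap x :=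
  Real.one_le_sqrt.mpr (le_add_of_nonneg_right (sq_nonneg _))

lemma jap_pos (x : V n) : 0 < jap x := one_pos.trans_le (one_le_jap x)

lemma norm_le_jap (x : V n) : ‖x‖ ≤ jap x :=
  Real.le_sqrt_of_sq_le (le_add_of_nonneg_left zero_le_one)

lemma jap_le_jap_add_norm_sub (x y : V n) : jap x ≤ jap y + ‖x - y‖ := by
  have hxy : ‖x‖ ≤ ‖y‖ + ‖x - y‖ := norm_le_norm_add_norm_sub' x y
  rw [jap, Real.sqrt_le_iff]
  refine ⟨add_nonneg (jap_pos y).le (norm_nonneg _), ?_⟩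
  have hy : jap y ^ 2 = 1 + ‖y‖ ^ 2 := Real.sq_sqrt (by positivity)
  nlinarith [norm_le_jap y, norm_nonneg x, norm_nonneg y, norm_nonneg (x - y)]

lemma norm_sq_le_of_forall_sq_le {z : V n} {t : ℝ} (h : ∀ j, z j ^ 2 ≤ t) :
    ‖z‖ ^ 2 ≤ n * t := by
  rw [EuclideanSpace.norm_sq_eq]
  calc ∑ j, ‖z j‖ ^ 2 ≤ ∑ _j : Fin n, t :=
        Finset.sum_le_sum fun j _ => by rw [Real.norm_eq_abs, sq_abs]; exact h j
    _ = n * t := by simp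

lemma norm_le_sqrt_mul_of_coeff {z : V n} {c : Fin n → ℝ} {t u : ℝ} (ht : 0 < t)
    (hc : ∀ j, (t ^ 2)⁻¹ ≤ c j) (hz : ∀ j, c j * z j ^ 2 ≤ u) : ‖z‖ ≤ √(n * u) * t := by
  have hsq : ∀ j, z j ^ 2 ≤ u * t ^ 2 := fun j => by
    rw [← div_le_iff₀ (by positivity), div_eq_mul_inv, mul_comm]
    exact (mul_le_mul_of_nonneg_right (hc j) (sq_nonneg _)).trans (hz j)
  calc ‖z‖ = √(‖z‖ ^ 2) := (Real.sqrt_sq (norm_nonneg z)).symm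
    _ ≤ √(n * (u * t ^ 2)) := Real.sqrt_le_sqrt (norm_sq_le_of_forall_sq_le hsq)
    _ = √(n * u) * t := by rw [← mul_assoc, Real.sqrt_mul' _ (sq_nonneg t), Real.sqrt_sq ht.le]

def JapComparable (K : ℝ) (x y : V n) : Prop :=
  jap x ≤ K * jap y ∧ jap y ≤ K * jap x

lemma JapComparable.symm {K : ℝ} {x y : V n} (h : JapComparable K x y) : JapComparable K y x :=
  ⟨h.2, h.1⟩

lemma JapComparable.mono {K K' : ℝ} {x y : V n} (h : JapComparable K x y) (hK : K ≤ K') :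
    JapComparable K' x y :=
  ⟨h.1.trans (mul_le_mul_of_nonneg_right hK (jap_pos y).le),
    h.2.trans (mul_le_mul_of_nonneg_right hK (jap_pos x).le)⟩

lemma JapComparable.one_le {K : ℝ} {x y : V n} (h : JapComparable K x y) : 1 ≤ K := by
  by_contra! hK
  nlinarith [h.1, h.2, jap_pos x, jap_pos y]

lemma JapComparable.rpow_le {K : ℝ} {x y : V n} (h : JapComparable K x y) (a : ℝ) :
    jap x ^ a ≤ K ^ |a| * jap y ^ a :=
  Real.rpow_le_rpow_abs_mul_of_le_mul (jap_pos x) (jap_pos y) h.one_le h.1 h.2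

lemma japComparable_two_of_norm_sub_le {x y : V n} (h : ‖y - x‖ ≤ jap x / 2) :
    JapComparable 2 x y := by
  have h₁ := jap_le_jap_add_norm_sub y x
  have h₂ := jap_le_jap_add_norm_sub x y
  rw [norm_sub_rev] at h₂
  constructor <;> linarith [jap_pos x]

lemma japComparable_of_norm_sub_le_mul_rpow {x y : V n} {w d : ℝ} (hw : 0 ≤ w) (hd₀ : 0 ≤ d)
    (hd₁ : d < 1) (h : ‖x - y‖ ≤ w * jap y ^ d) :
    JapComparable (3 * (2 * (1 + w)) ^ (1 - d)⁻¹) x y := by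
  set L := 2 * (1 + w)
  have hq : 1 ≤ (1 - d)⁻¹ := one_le_inv₀ (by linarith) |>.mpr (by linarith)
  have hL : L ≤ L ^ (1 - d)⁻¹ := Real.self_le_rpow_of_one_le (by linarith) hq
  have hyd : jap y ^ d ≤ jap y :=
    (Real.rpow_le_rpow_of_exponent_le (one_le_jap y) hd₁.le).trans_eq (Real.rpow_one _)
  have hxy := jap_le_jap_add_norm_sub x y
  have hyx := jap_le_jap_add_norm_sub y x
  rw [norm_sub_rev] at hyx
  have hy := le_mul_of_le_add_mul_rpow (one_le_jap x) (jap_pos y) hw hd₁ (hyx.trans (by linarith))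
  have h2w : (2 * w) ^ (1 - d)⁻¹ ≤ L ^ (1 - d)⁻¹ :=
    Real.rpow_le_rpow (by positivity) (by linarith) (by linarith)
  constructor <;> nlinarith [jap_pos x, jap_pos y]

def japWeight (a b : ℝ) (X : W n) : ℝ := jap X.1 ^ a * jap X.2 ^ b

lemma japWeight_pos (a b : ℝ) (X : W n) : 0 < japWeight a b X :=
  mul_pos (Real.rpow_pos_of_pos (jap_pos _) a) (Real.rpow_pos_of_pos (jap_pos _) b)

lemma japWeight_inv (a b : ℝ) (X : W n) : (japWeight a b X)⁻¹ = japWeight (-a) (-b) X := by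
  rw [japWeight, japWeight, mul_inv, Real.rpow_neg (jap_pos _).le, Real.rpow_neg (jap_pos _).le]

lemma japWeight_mul (a b a' b' : ℝ) (X : W n) :
    japWeight a b X * japWeight a' b' X = japWeight (a + a') (b + b') X := by
  rw [japWeight, japWeight, japWeight, Real.rpow_add (jap_pos _), Real.rpow_add (jap_pos _)]
  ring

lemma sqrt_japWeight_two_mul (a b : ℝ) (X : W n) :
    √(japWeight (2 * a) (2 * b) X) = japWeight a b X := by
  rw [Real.sqrt_eq_iff_mul_self_eq (japWeight_pos _ _ _).le (japWeight_pos _ _ _).le,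
    japWeight_mul]
  ring_nf

lemma japWeight_le_one {a b : ℝ} (ha : a ≤ 0) (hb : b ≤ 0) (X : W n) : japWeight a b X ≤ 1 :=
  mul_le_one₀ (Real.rpow_le_one_of_one_le_of_nonpos (one_le_jap _) ha)
    (Real.rpow_nonneg (jap_pos _).le b) (Real.rpow_le_one_of_one_le_of_nonpos (one_le_jap _) hb)

lemma japWeight_le_of_japComparable {K : ℝ} {X Y : W n}
    (h₁ : JapComparable K X.1 Y.1) (h₂ : JapComparable K X.2 Y.2) (a b : ℝ) :
    japWeight a b X ≤ K ^ (|a| + |b|) * japWeight a b Y := by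
  have hK : 0 < K := one_pos.trans_le h₁.one_le
  rw [Real.rpow_add hK, japWeight, japWeight, mul_mul_mul_comm]
  exact mul_le_mul (h₁.rpow_le a) (h₂.rpow_le b) (Real.rpow_nonneg (jap_pos _).le b)
    (mul_nonneg (Real.rpow_nonneg hK.le _) (Real.rpow_nonneg (jap_pos _).le a))

end

section

variable {n : ℕ}

def diagQuad (A B : Fin n → ℝ) (Z : W n) : ℝ :=
  (∑ j, A j * Z.1 j ^ 2) + ∑ j, B j * Z.2 j ^ 2

variable {A B : Fin n → ℝ}

lemma diagQuad_nonneg (hA : ∀ j, 0 ≤ A j) (hB : ∀ j, 0 ≤ B j) (Z : W n) : 0 ≤ diagQuad A B Z :=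
  add_nonneg (Finset.sum_nonneg fun j _ => mul_nonneg (hA j) (sq_nonneg _))
    (Finset.sum_nonneg fun j _ => mul_nonneg (hB j) (sq_nonneg _))

lemma diagQuad_zero : diagQuad A B (0 : W n) = 0 := by
  simp [diagQuad]

lemma diagQuad_neg_snd (z ζ : V n) : diagQuad A B (z, -ζ) = diagQuad A B (z, ζ) := by
  simp [diagQuad]

lemma diagQuad_single_fst (j : Fin n) :
    diagQuad A B (WithLp.toLp 2 (Pi.single j 1), 0) = A j := by
  simp [diagQuad, Pi.single_apply]

lemma mul_sq_fst_le_diagQuad (hA : ∀ j, 0 ≤ A j) (hB : ∀ j, 0 ≤ B j) (Z : W n) (j : Fin n) :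
    A j * Z.1 j ^ 2 ≤ diagQuad A B Z :=
  (Finset.single_le_sum (f := fun k => A k * Z.1 k ^ 2)
    (fun k _ => mul_nonneg (hA k) (sq_nonneg _)) (Finset.mem_univ j)).trans
    (le_add_of_nonneg_right (Finset.sum_nonneg fun k _ => mul_nonneg (hB k) (sq_nonneg _)))

lemma mul_sq_snd_le_diagQuad (hA : ∀ j, 0 ≤ A j) (hB : ∀ j, 0 ≤ B j) (Z : W n) (j : Fin n) :
    B j * Z.2 j ^ 2 ≤ diagQuad A B Z :=
  (Finset.single_le_sum (f := fun k => B k * Z.2 k ^ 2)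
    (fun k _ => mul_nonneg (hB k) (sq_nonneg _)) (Finset.mem_univ j)).trans
    (le_add_of_nonneg_left (Finset.sum_nonneg fun k _ => mul_nonneg (hA k) (sq_nonneg _)))

lemma diagQuad_le_mul {A' B' : Fin n → ℝ} {c : ℝ} (hA : ∀ j, A j ≤ c * A' j)
    (hB : ∀ j, B j ≤ c * B' j) (Z : W n) : diagQuad A B Z ≤ c * diagQuad A' B' Z := by
  rw [diagQuad, diagQuad, mul_add, Finset.mul_sum, Finset.mul_sum]
  refine add_le_add (Finset.sum_le_sum fun j _ => ?_) (Finset.sum_le_sum fun j _ => ?_)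
  · rw [← mul_assoc]; exact mul_le_mul_of_nonneg_right (hA j) (sq_nonneg _)
  · rw [← mul_assoc]; exact mul_le_mul_of_nonneg_right (hB j) (sq_nonneg _)

lemma symp_sq_le_diagQuad_mul (hA : ∀ j, 0 < A j) (hB : ∀ j, 0 < B j) (Y Z : W n) :
    symp Y Z ^ 2 ≤ diagQuad A B Y * diagQuad B⁻¹ A⁻¹ Z := by
  have hCS := Finset.sum_mul_sq_le_sq_mul_sq Finset.univ
    (Sum.elim (fun j => √(B j) * Y.2 j) (fun j => √(A j) * Y.1 j))
    (Sum.elim (fun j => Z.1 j / √(B j)) (fun j => -(Z.2 j / √(A j))))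
  have hsA : ∀ j, √(A j) ≠ 0 := fun j => (Real.sqrt_pos.mpr (hA j)).ne'
  have hsB : ∀ j, √(B j) ≠ 0 := fun j => (Real.sqrt_pos.mpr (hB j)).ne'
  simp only [Fintype.sum_sum_type, Sum.elim_inl, Sum.elim_inr, mul_pow, div_pow, neg_sq,
    Real.sq_sqrt (hA _).le, Real.sq_sqrt (hB _).le] at hCS
  calc symp Y Z ^ 2
      = ((∑ j, √(B j) * Y.2 j * (Z.1 j / √(B j))) +
          ∑ j, √(A j) * Y.1 j * -(Z.2 j / √(A j))) ^ 2 := by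
        simp only [symp, sub_eq_add_neg, ← Finset.sum_neg_distrib]
        congr 2 <;> refine Finset.sum_congr rfl fun j _ => ?_ <;> field_simp [hsA j, hsB j]
    _ ≤ _ := hCS
    _ = diagQuad A B Y * diagQuad B⁻¹ A⁻¹ Z := by
        simp only [diagQuad, Pi.inv_apply, inv_mul_eq_div]
        ring

lemma dualFn_eq_diagQuad {G : W n → W n → ℝ} {X : W n} (hG : G X = diagQuad A B)
    (hA : ∀ j, 0 < A j) (hB : ∀ j, 0 < B j) : dualFn G X = diagQuad B⁻¹ A⁻¹ := by
  have hA' : ∀ j, 0 < A⁻¹ j := fun j => inv_pos.mpr (hA j)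
  have hB' : ∀ j, 0 < B⁻¹ j := fun j => inv_pos.mpr (hB j)
  funext Z
  have hS := diagQuad_nonneg (fun j => (hB' j).le) (fun j => (hA' j).le) Z
  have hup : ∀ Y : {Y : W n // Y ≠ 0}, symp Y.1 Z ^ 2 / G X Y.1 ≤ diagQuad B⁻¹ A⁻¹ Z := by
    rintro ⟨Y, -⟩
    refine div_le_of_le_mul₀ (hG ▸ diagQuad_nonneg (fun j => (hA j).le) (fun j => (hB j).le) Y)
      hS ?_
    rw [hG, mul_comm]
    exact symp_sq_le_diagQuad_mul hA hB Y Z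
  refine le_antisymm (Real.iSup_le hup hS) ?_
  rcases hS.eq_or_lt with hS0 | hSpos
  · rw [← hS0]
    exact Real.iSup_nonneg fun Y => div_nonneg (sq_nonneg _) (hG ▸ diagQuad_nonneg
      (fun j => (hA j).le) (fun j => (hB j).le) Y.1)
  set Y₀ : W n := (WithLp.toLp 2 fun j => -(Z.2 j / A j), WithLp.toLp 2 fun j => Z.1 j / B j)
  have hsymp : symp Y₀ Z = diagQuad B⁻¹ A⁻¹ Z := by
    simp only [symp, diagQuad, Y₀, Pi.inv_apply]
    rw [sub_eq_add_neg, ← Finset.sum_neg_distrib]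
    congr 1 <;> refine Finset.sum_congr rfl fun j _ => ?_ <;> ring
  have hGY₀ : G X Y₀ = diagQuad B⁻¹ A⁻¹ Z := by
    simp only [hG, diagQuad, Y₀, Pi.inv_apply]
    rw [add_comm]
    congr 1 <;> refine Finset.sum_congr rfl fun j _ => ?_
    · field_simp [(hB j).ne']
    · field_simp [(hA j).ne']
  have hY₀ : Y₀ ≠ 0 := by
    rintro h
    rw [h, hG, diagQuad_zero] at hGY₀
    exact hSpos.ne hGY₀
  calc diagQuad B⁻¹ A⁻¹ Z = symp Y₀ Z ^ 2 / G X Y₀ := by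
        rw [hsymp, hGY₀, sq, mul_div_assoc, div_self hSpos.ne', mul_one]
    _ ≤ _ := le_ciSup ⟨_, Set.forall_mem_range.mpr hup⟩ (⟨Y₀, hY₀⟩ : {Y : W n // Y ≠ 0})

lemma iSup_sqrt_diagQuad_div (hA : ∀ j, 0 < A j) (hB : ∀ j, 0 < B j) :
    ⨆ Z : {Z : W n // Z ≠ 0}, √(diagQuad A B Z.1 / diagQuad B⁻¹ A⁻¹ Z.1) =
      ⨆ j, √(A j * B j) := by
  set M := ⨆ j, √(A j * B j)
  have hM : 0 ≤ M := Real.iSup_nonneg fun j => Real.sqrt_nonneg _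
  have hAB : ∀ j, A j * B j ≤ M ^ 2 := fun j =>
    (Real.sqrt_le_iff.mp (le_ciSup (Set.finite_range fun j => √(A j * B j)).bddAbove j)).2
  have hup : ∀ Z : {Z : W n // Z ≠ 0},
      √(diagQuad A B Z.1 / diagQuad B⁻¹ A⁻¹ Z.1) ≤ M := by
    rintro ⟨Z, -⟩
    refine Real.sqrt_le_iff.mpr ⟨hM, div_le_of_le_mul₀ (diagQuad_nonneg
      (fun j => (inv_pos.mpr (hB j)).le) (fun j => (inv_pos.mpr (hA j)).le) Z) (sq_nonneg M) ?_⟩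
    refine diagQuad_le_mul (fun j => ?_) (fun j => ?_) Z
    · rw [Pi.inv_apply, ← div_eq_mul_inv, le_div_iff₀ (hB j)]
      exact hAB j
    · rw [Pi.inv_apply, ← div_eq_mul_inv, le_div_iff₀ (hA j), mul_comm]
      exact hAB j
  refine le_antisymm (Real.iSup_le hup hM) (Real.iSup_le (fun j => ?_)
    (Real.iSup_nonneg fun _ => Real.sqrt_nonneg _))
  have hZ : (WithLp.toLp 2 (Pi.single j 1), 0) ≠ (0 : W n) := fun h => by
    simpa using congrArg (fun Z : W n => Z.1 j) h
  have hval := le_ciSup ⟨M, Set.forall_mem_range.mpr hup⟩ (⟨_, hZ⟩ : {Z : W n // Z ≠ 0})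
  rwa [diagQuad_single_fst, diagQuad_single_fst, Pi.inv_apply, div_inv_eq_mul] at hval

end

section

variable {n : ℕ} (ρ δ : Fin n ⊕ Fin n → ℝ)

/-- The coefficients of `y_j²` and `η_j²` in the `(ρ, δ)`-metric `g` of the statement. -/
def rdCoeffFst (X : W n) (j : Fin n) : ℝ := japWeight (-2 * ρ (.inr j)) (2 * δ (.inl j)) X

def rdCoeffSnd (X : W n) (j : Fin n) : ℝ := japWeight (2 * δ (.inr j)) (-2 * ρ (.inl j)) X

lemma rdCoeffFst_pos (X : W n) (j : Fin n) : 0 < rdCoeffFst ρ δ X j := japWeight_pos _ _ _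

lemma rdCoeffSnd_pos (X : W n) (j : Fin n) : 0 < rdCoeffSnd ρ δ X j := japWeight_pos _ _ _

def rdMetric (X : W n) : W n → ℝ := diagQuad (rdCoeffFst ρ δ X) (rdCoeffSnd ρ δ X)

lemma rdMetric_swap (X : W n) :
    rdMetric δ ρ X = diagQuad (rdCoeffSnd ρ δ X)⁻¹ (rdCoeffFst ρ δ X)⁻¹ := by
  have h₁ : rdCoeffFst δ ρ X = (rdCoeffSnd ρ δ X)⁻¹ := funext fun j => by
    rw [Pi.inv_apply, rdCoeffSnd, japWeight_inv, rdCoeffFst]; ring_nf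
  have h₂ : rdCoeffSnd δ ρ X = (rdCoeffFst ρ δ X)⁻¹ := funext fun j => by
    rw [Pi.inv_apply, rdCoeffFst, japWeight_inv, rdCoeffSnd]; ring_nf
  rw [rdMetric, h₁, h₂]

lemma dualFn_rdMetric (X : W n) : dualFn (rdMetric ρ δ) X = rdMetric δ ρ X := by
  rw [rdMetric_swap ρ δ]
  exact dualFn_eq_diagQuad rfl (rdCoeffFst_pos ρ δ X) (rdCoeffSnd_pos ρ δ X)

lemma iSup_sqrt_rdMetric_div (X : W n) :
    ⨆ Z : {Z : W n // Z ≠ 0}, √(rdMetric ρ δ X Z.1 / rdMetric δ ρ X Z.1) =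
      ⨆ j, japWeight (δ (.inr j) - ρ (.inr j)) (δ (.inl j) - ρ (.inl j)) X := by
  rw [rdMetric_swap ρ δ, rdMetric, iSup_sqrt_diagQuad_div (rdCoeffFst_pos ρ δ X)
    (rdCoeffSnd_pos ρ δ X)]
  congr 1 with j
  rw [rdCoeffFst, rdCoeffSnd, japWeight_mul, ← sqrt_japWeight_two_mul (δ _ - ρ _)]
  ring_nf

end

section

variable {n : ℕ} {ρ δ : Fin n ⊕ Fin n → ℝ}

lemma rdMetric_nonneg (X Z : W n) : 0 ≤ rdMetric ρ δ X Z :=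
  diagQuad_nonneg (fun j => (rdCoeffFst_pos ρ δ X j).le) (fun j => (rdCoeffSnd_pos ρ δ X j).le) Z

lemma rdMetric_le_of_japComparable {K : ℝ} {X Y : W n}
    (h₁ : JapComparable K X.1 Y.1) (h₂ : JapComparable K X.2 Y.2) (Z : W n) :
    rdMetric ρ δ X Z ≤ K ^ (2 * (‖ρ‖ + ‖δ‖)) * rdMetric ρ δ Y Z := by
  have hρ : ∀ i, |ρ i| ≤ ‖ρ‖ := fun i => (Real.norm_eq_abs _).symm.trans_le (norm_le_pi_norm ρ i)
  have hδ : ∀ i, |δ i| ≤ ‖δ‖ := fun i => (Real.norm_eq_abs _).symm.trans_le (norm_le_pi_norm δ i)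
  have hcoeff : ∀ a b, |a| + |b| ≤ 2 * (‖ρ‖ + ‖δ‖) →
      japWeight a b X ≤ K ^ (2 * (‖ρ‖ + ‖δ‖)) * japWeight a b Y := fun a b hab =>
    (japWeight_le_of_japComparable h₁ h₂ a b).trans
      (mul_le_mul_of_nonneg_right (Real.rpow_le_rpow_of_exponent_le h₁.one_le hab)
        (japWeight_pos a b Y).le)
  refine diagQuad_le_mul (fun j => hcoeff _ _ ?_) (fun j => hcoeff _ _ ?_) Z <;>
  · simp only [abs_mul, abs_neg, abs_two]
    linarith [hρ (.inl j), hρ (.inr j), hδ (.inl j), hδ (.inr j)]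

lemma inv_sq_rpow_le_rdCoeffFst {e : ℝ} (hρ : ∀ i, ρ i ≤ e) (hδ : ∀ i, 0 ≤ δ i) (X : W n)
    (j : Fin n) : ((jap X.1 ^ e) ^ 2)⁻¹ ≤ rdCoeffFst ρ δ X j := by
  rw [← Real.rpow_natCast, ← Real.rpow_mul (jap_pos _).le, ← Real.rpow_neg (jap_pos _).le]
  refine (Real.rpow_le_rpow_of_exponent_le (one_le_jap _) ?_).trans
    (le_mul_of_one_le_right (Real.rpow_nonneg (jap_pos _).le _)
      (Real.one_le_rpow (one_le_jap _) ?_))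
  · push_cast; linarith [hρ (.inr j)]
  · linarith [hδ (.inl j)]

lemma inv_sq_rpow_le_rdCoeffSnd {e : ℝ} (hρ : ∀ i, ρ i ≤ e) (hδ : ∀ i, 0 ≤ δ i) (X : W n)
    (j : Fin n) : ((jap X.2 ^ e) ^ 2)⁻¹ ≤ rdCoeffSnd ρ δ X j := by
  rw [← Real.rpow_natCast, ← Real.rpow_mul (jap_pos _).le, ← Real.rpow_neg (jap_pos _).le]
  refine (Real.rpow_le_rpow_of_exponent_le (one_le_jap _) ?_).trans
    (le_mul_of_one_le_left (Real.rpow_nonneg (jap_pos _).le _)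
      (Real.one_le_rpow (one_le_jap _) ?_))
  · push_cast; linarith [hρ (.inl j)]
  · linarith [hδ (.inr j)]

lemma norm_le_of_rdMetric_le {e u : ℝ} (hρ : ∀ i, ρ i ≤ e) (hδ : ∀ i, 0 ≤ δ i) {X Z : W n}
    (h : rdMetric ρ δ X Z ≤ u) :
    ‖Z.1‖ ≤ √(n * u) * jap X.1 ^ e ∧ ‖Z.2‖ ≤ √(n * u) * jap X.2 ^ e := by
  have hA := fun j => (rdCoeffFst_pos ρ δ X j).le
  have hB := fun j => (rdCoeffSnd_pos ρ δ X j).le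
  exact ⟨norm_le_sqrt_mul_of_coeff (Real.rpow_pos_of_pos (jap_pos _) e)
      (inv_sq_rpow_le_rdCoeffFst hρ hδ X) fun j => (mul_sq_fst_le_diagQuad hA hB Z j).trans h,
    norm_le_sqrt_mul_of_coeff (Real.rpow_pos_of_pos (jap_pos _) e)
      (inv_sq_rpow_le_rdCoeffSnd hρ hδ X) fun j => (mul_sq_snd_le_diagQuad hA hB Z j).trans h⟩

lemma japComparable_two_of_rdMetric_sub_le (hρ : ∀ i, ρ i ≤ 1) (hδ : ∀ i, 0 ≤ δ i)
    {X Y : W n} (h : rdMetric ρ δ X (Y - X) ≤ (4 * ((n : ℝ) + 1))⁻¹) :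
    JapComparable 2 X.1 Y.1 ∧ JapComparable 2 X.2 Y.2 := by
  have hw : √(n * (4 * ((n : ℝ) + 1))⁻¹) ≤ 1 / 2 := by
    refine Real.sqrt_le_iff.mpr ⟨by norm_num, ?_⟩
    rw [← div_eq_mul_inv, div_le_iff₀ (by positivity)]
    linarith
  obtain ⟨h₁, h₂⟩ := norm_le_of_rdMetric_le hρ hδ h
  simp only [Prod.fst_sub, Prod.snd_sub, Real.rpow_one] at h₁ h₂
  exact ⟨japComparable_two_of_norm_sub_le (by nlinarith [jap_pos X.1]),
    japComparable_two_of_norm_sub_le (by nlinarith [jap_pos X.2])⟩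

lemma dualM_of_val_eq {g : RMetric n} (hg : g.val = rdMetric ρ δ) : dualM g = rdMetric δ ρ := by
  funext X
  rw [dualM, hg, dualFn_rdMetric]

lemma planck_of_val_eq {g : RMetric n} (hg : g.val = rdMetric ρ δ) (X : W n) :
    planck g X = ⨆ j, japWeight (δ (.inr j) - ρ (.inr j)) (δ (.inl j) - ρ (.inl j)) X := by
  rw [planck, dualM_of_val_eq hg, hg, iSup_sqrt_rdMetric_div]

lemma planck_le_one_of_val_eq {g : RMetric n} (hg : g.val = rdMetric ρ δ)
    (hδρ : ∀ i, δ i ≤ ρ i) (X : W n) : planck g X ≤ 1 := by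
  rw [planck_of_val_eq hg]
  exact Real.iSup_le (fun j => japWeight_le_one (by linarith [hδρ (.inr j)])
    (by linarith [hδρ (.inl j)]) X) zero_le_one

lemma isSlowlyVarying_of_val_eq {g : RMetric n} (hg : g.val = rdMetric ρ δ)
    (hρ : ∀ i, ρ i ≤ 1) (hδ : ∀ i, 0 ≤ δ i) : IsSlowlyVarying g := by
  refine ⟨(4 * ((n : ℝ) + 1))⁻¹, by positivity, 2 ^ (2 * (‖ρ‖ + ‖δ‖)), by positivity,
    fun X Y hXY Z => ?_⟩
  rw [hg] at hXY ⊢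
  obtain ⟨h₁, h₂⟩ := japComparable_two_of_rdMetric_sub_le hρ hδ hXY
  exact ⟨(inv_mul_le_iff₀ (by positivity)).mpr (rdMetric_le_of_japComparable h₁.symm h₂.symm Z),
    rdMetric_le_of_japComparable h₁ h₂ Z⟩

lemma isGCont_japWeight_of_val_eq {g : RMetric n} (hg : g.val = rdMetric ρ δ)
    (hρ : ∀ i, ρ i ≤ 1) (hδ : ∀ i, 0 ≤ δ i) (a b : ℝ) : IsGCont g (japWeight a b) := by
  refine ⟨(4 * ((n : ℝ) + 1))⁻¹, by positivity, 2 ^ (|a| + |b|), by positivity, fun X Y hXY => ?_⟩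
  rw [hg] at hXY
  obtain ⟨h₁, h₂⟩ := japComparable_two_of_rdMetric_sub_le hρ hδ hXY
  exact ⟨(inv_mul_le_iff₀ (by positivity)).mpr (japWeight_le_of_japComparable h₁.symm h₂.symm a b),
    japWeight_le_of_japComparable h₁ h₂ a b⟩

lemma isSigmaTemperate_of_val_eq {g : RMetric n} (hg : g.val = rdMetric ρ δ)
    (hρ : ∀ i, 0 ≤ ρ i) (hδ₁ : ∀ i, δ i < 1) : IsSigmaTemperate g := by
  obtain ⟨d, hd₀, hd₁, hδd⟩ := exists_le_lt_forall_le_of_forall_lt zero_lt_one hδ₁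
  set q := (1 - d)⁻¹
  set E := 2 * (‖ρ‖ + ‖δ‖)
  set c := 3 * (2 * ((n : ℝ) + 1)) ^ q
  have hq : 0 ≤ q := inv_nonneg.mpr (by linarith)
  refine ⟨c ^ E, by positivity, ⌈q * E⌉₊, fun X Y Z => ?_⟩
  rw [dualM_of_val_eq hg, hg]
  set u := rdMetric δ ρ Y (X - Y)
  have hu : 0 ≤ u := rdMetric_nonneg _ _
  have hK : 3 * (2 * (1 + √(n * u))) ^ q ≤ c * (1 + u) ^ q := by
    have hsqrt : √(n * u) ≤ n + u := Real.sqrt_le_iff.mpr ⟨by positivity, by nlinarith⟩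
    have hbase : 2 * (1 + √(n * u)) ≤ 2 * ((n : ℝ) + 1) * (1 + u) := by nlinarith
    rw [mul_assoc, ← Real.mul_rpow (by positivity) (by positivity)]
    exact mul_le_mul_of_nonneg_left (Real.rpow_le_rpow (by positivity) hbase hq) (by norm_num)
  obtain ⟨h₁, h₂⟩ := norm_le_of_rdMetric_le hδd hρ (le_refl u)
  simp only [Prod.fst_sub, Prod.snd_sub] at h₁ h₂
  have hc₁ := (japComparable_of_norm_sub_le_mul_rpow (Real.sqrt_nonneg _) hd₀ hd₁ h₁).mono hK
  have hc₂ := (japComparable_of_norm_sub_le_mul_rpow (Real.sqrt_nonneg _) hd₀ hd₁ h₂).mono hK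
  calc rdMetric ρ δ Y Z ≤ (c * (1 + u) ^ q) ^ E * rdMetric ρ δ X Z :=
        rdMetric_le_of_japComparable hc₁.symm hc₂.symm Z
    _ = c ^ E * rdMetric ρ δ X Z * (1 + u) ^ (q * E) := by
        rw [Real.mul_rpow (by positivity) (by positivity), ← Real.rpow_mul (by positivity)]
        ring
    _ ≤ c ^ E * rdMetric ρ δ X Z * (1 + u) ^ ⌈q * E⌉₊ := by
        rw [← Real.rpow_natCast]
        exact mul_le_mul_of_nonneg_left
          (Real.rpow_le_rpow_of_exponent_le (by linarith) (Nat.le_ceil _))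
          (mul_nonneg (by positivity) (rdMetric_nonneg _ _))

end

theorem statement17_general (n : ℕ) (r s : ℝ) (ρ δ : Fin n ⊕ Fin n → ℝ)
    (g : RMetric n)
    (hgval : ∀ x ξ y η : V n, g.val (x, ξ) (y, η) =
      (∑ j, jap x ^ (-2 * ρ (Sum.inr j)) * jap ξ ^ (2 * δ (Sum.inl j)) * y j ^ 2) +
        ∑ j, jap x ^ (2 * δ (Sum.inr j)) * jap ξ ^ (-2 * ρ (Sum.inl j)) * η j ^ 2)
    (m : W n → ℝ) (hmval : ∀ x ξ : V n, m (x, ξ) = jap x ^ s * jap ξ ^ r) :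
    IsSplitted g ∧
    (∀ x ξ y η : V n, dualM g (x, ξ) (y, η) =
      (∑ j, jap x ^ (-2 * δ (Sum.inr j)) * jap ξ ^ (2 * ρ (Sum.inl j)) * y j ^ 2) +
        ∑ j, jap x ^ (2 * ρ (Sum.inr j)) * jap ξ ^ (-2 * δ (Sum.inl j)) * η j ^ 2) ∧
    (∀ x ξ : V n, planck g (x, ξ) =
      ⨆ j : Fin n, jap x ^ (δ (Sum.inr j) - ρ (Sum.inr j)) *
        jap ξ ^ (δ (Sum.inl j) - ρ (Sum.inl j))) ∧
    ((∀ i, ρ i ≤ 1) → (∀ i, 0 ≤ δ i) → IsSlowlyVarying g ∧ IsGCont g m) ∧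
    ((∀ i, 0 ≤ δ i) → (∀ i, δ i ≤ ρ i) → (∀ i, ρ i ≤ 1) → IsFeasible g) ∧
    ((∀ i, 0 ≤ δ i) → (∀ i, δ i ≤ ρ i) → (∀ i, ρ i ≤ 1) → (∀ i, δ i < 1) →
      IsStronglyFeasible g) := by
  have hg : g.val = rdMetric ρ δ := funext₂ fun X Z => hgval X.1 X.2 Z.1 Z.2
  have hm : m = japWeight s r := funext fun X => hmval X.1 X.2
  refine ⟨fun X z ζ => by rw [hg, rdMetric, diagQuad_neg_snd],
    fun x ξ y η => congrFun₂ (dualM_of_val_eq hg) (x, ξ) (y, η),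
    fun x ξ => planck_of_val_eq hg (x, ξ),
    fun hρ hδ => ⟨isSlowlyVarying_of_val_eq hg hρ hδ,
      hm ▸ isGCont_japWeight_of_val_eq hg hρ hδ s r⟩,
    fun hδ hδρ hρ => ⟨isSlowlyVarying_of_val_eq hg hρ hδ, planck_le_one_of_val_eq hg hδρ⟩,
    fun hδ hδρ hρ hδ₁ => ⟨⟨isSlowlyVarying_of_val_eq hg hρ hδ, planck_le_one_of_val_eq hg hδρ⟩,
      isSigmaTemperate_of_val_eq hg (fun i => (hδ i).trans (hδρ i)) hδ₁⟩⟩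

/-- Lemma `rhodeltafeasible`: properties of the metric
`g_{(x,ξ)}(y,η) = Σ ⟨x⟩^{-2ρ_{n+j}} ⟨ξ⟩^{2δ_j} y_j² + Σ ⟨x⟩^{2δ_{n+j}} ⟨ξ⟩^{-2ρ_j} η_j²`
and weight `m(x,ξ) = ⟨x⟩^s ⟨ξ⟩^r`.  (The index `inl j` is `j ∈ {1,…,n}` and `inr j`
is `n+j`.) -/
theorem statement17 (n : ℕ) (hn : 0 < n) (r s : ℝ) (ρ δ : Fin n ⊕ Fin n → ℝ)
    (g : RMetric n)
    (hgval : ∀ x ξ y η : V n, g.val (x, ξ) (y, η) =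
      (∑ j, jap x ^ (-2 * ρ (Sum.inr j)) * jap ξ ^ (2 * δ (Sum.inl j)) * y j ^ 2) +
        ∑ j, jap x ^ (2 * δ (Sum.inr j)) * jap ξ ^ (-2 * ρ (Sum.inl j)) * η j ^ 2)
    (m : W n → ℝ) (hmval : ∀ x ξ : V n, m (x, ξ) = jap x ^ s * jap ξ ^ r) :
    IsSplitted g ∧
    (∀ x ξ y η : V n, dualM g (x, ξ) (y, η) =
      (∑ j, jap x ^ (-2 * δ (Sum.inr j)) * jap ξ ^ (2 * ρ (Sum.inl j)) * y j ^ 2) +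
        ∑ j, jap x ^ (2 * ρ (Sum.inr j)) * jap ξ ^ (-2 * δ (Sum.inl j)) * η j ^ 2) ∧
    (∀ x ξ : V n, planck g (x, ξ) =
      ⨆ j : Fin n, jap x ^ (δ (Sum.inr j) - ρ (Sum.inr j)) *
        jap ξ ^ (δ (Sum.inl j) - ρ (Sum.inl j))) ∧
    ((∀ i, ρ i ≤ 1) → (∀ i, 0 ≤ δ i) → IsSlowlyVarying g ∧ IsGCont g m) ∧
    ((∀ i, 0 ≤ δ i) → (∀ i, δ i ≤ ρ i) → (∀ i, ρ i ≤ 1) → IsFeasible g) ∧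
    ((∀ i, 0 ≤ δ i) → (∀ i, δ i ≤ ρ i) → (∀ i, ρ i ≤ 1) → (∀ i, δ i < 1) →
      IsStronglyFeasible g) :=
  statement17_general n r s ρ δ g hgval m hmval

end
end
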